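/- arXiv:2212.05426 — 2 statements merged into one kernel-verified Lean document; each statement's English description precedes it below -/
import Mathlib

section
/- Let l ≥ 3 and p ≥ 2 be integers with pl even. Then μ_{l,p}(full) ≤ p² · 2^p · μ_{l,p}(standard). -/
/-- The union of all member sets of a set-collection. -/
def unionC (C : Multiset (Finset ℕ)) : Finset ℕ := C.sup

/-- A set-collection is a double-covering if every point of its union lies in
exactly two member sets (counted with multiplicity). -/
def IsDoubleCover (C : Multiset (Finset ℕ)) : Prop :=
  ∀ a ∈ unionC C, Multiset.countP (fun A => a ∈ A) C = 2

/-- A set-collection is an even-covering if every point of its union lies in an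
even number of member sets (counted with multiplicity). -/
def IsEvenCover (C : Multiset (Finset ℕ)) : Prop :=
  ∀ a ∈ unionC C, Even (Multiset.countP (fun A => a ∈ A) C)

/-- Two set-collections are isomorphic: there is a bijection between their
unions mapping the first multiset of sets onto the second. -/
def Isomorphic (C D : Multiset (Finset ℕ)) : Prop :=
  ∃ φ : ℕ → ℕ, Set.BijOn φ ↑(unionC C) ↑(unionC D) ∧
    C.map (Finset.image φ) = D

/-- A set-collection is connected if any two member sets are joined by a chain
of member sets with consecutive nonempty intersections. -/
def ConnectedColl (C : Multiset (Finset ℕ)) : Prop :=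
  ∀ A ∈ C, ∀ B ∈ C,
    Relation.ReflTransGen (fun X Y => X ∈ C ∧ Y ∈ C ∧ (X ∩ Y).Nonempty) A B

/-- `D` is a connected component of `C`: a nonempty connected sub-multiset
separated from the rest of `C`. -/
def IsComponent (C D : Multiset (Finset ℕ)) : Prop :=
  D ≤ C ∧ D ≠ 0 ∧ ConnectedColl D ∧ ∀ B ∈ C - D, ∀ A ∈ D, B ∩ A = ∅

/-- A set-collection is standard if no two of its distinct connected components
are isomorphic. -/
def IsStandard (C : Multiset (Finset ℕ)) : Prop :=
  ∀ D E : Multiset (Finset ℕ),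
    IsComponent C D → IsComponent C E → D ≠ E → ¬ Isomorphic D E

/-- `μ_{l,p}(full)`: the number of isomorphism classes of double-coverings of
`p` sets each of cardinality `l`. -/
noncomputable def muFull (l p : ℕ) : ℕ :=
  Nat.card (Quot (fun C D : {C : Multiset (Finset ℕ) //
      Multiset.card C = p ∧ IsDoubleCover C ∧ ∀ A ∈ C, A.card = l} =>
    Isomorphic C.1 D.1))

/-- `μ_{l,p}(standard)`: the number of isomorphism classes of standard
double-coverings of `p` sets each of cardinality `l`. -/
noncomputable def muStandard (l p : ℕ) : ℕ :=
  Nat.card (Quot (fun C D : {C : Multiset (Finset ℕ) //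
      Multiset.card C = p ∧ IsDoubleCover C ∧ IsStandard C ∧ ∀ A ∈ C, A.card = l} =>
    Isomorphic C.1 D.1))

/-- `μ*_{l,p}(full)`: the number of isomorphism classes of double-coverings of
`p` sets each of cardinality between `1` and `l`. -/
noncomputable def muStarFull (l p : ℕ) : ℕ :=
  Nat.card (Quot (fun C D : {C : Multiset (Finset ℕ) //
      Multiset.card C = p ∧ IsDoubleCover C ∧ ∀ A ∈ C, 1 ≤ A.card ∧ A.card ≤ l} =>
    Isomorphic C.1 D.1))

/-- The family `D_{l,p}` of double-coverings of `p` sets of cardinality `l`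
contained in `{1,…,pl/2}`. -/
def Dfull (l p : ℕ) : Set (Multiset (Finset ℕ)) :=
  {C | Multiset.card C = p ∧ IsDoubleCover C ∧
    (∀ A ∈ C, A ⊆ Finset.Icc 1 (p * l / 2)) ∧ ∀ A ∈ C, A.card = l}

/-- The family `D*_{l,p}` of double-coverings of `p` sets of cardinality
between `1` and `l` contained in `{1,…,pl/2}`. -/
def Dstar (l p : ℕ) : Set (Multiset (Finset ℕ)) :=
  {C | Multiset.card C = p ∧ IsDoubleCover C ∧
    (∀ A ∈ C, A ⊆ Finset.Icc 1 (p * l / 2)) ∧ ∀ A ∈ C, 1 ≤ A.card ∧ A.card ≤ l}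

/-- The Rademacher function `r_n(x) = sign (sin (2^n π x))`. -/
noncomputable def rademacher (n : ℕ) (x : ℝ) : ℝ :=
  Real.sign (Real.sin (2 ^ n * Real.pi * x))

/-- The Walsh function `w_A = ∏_{k ∈ A} r_k`. -/
noncomputable def walsh (A : Finset ℕ) (x : ℝ) : ℝ :=
  ∏ k ∈ A, rademacher k x

abbrev MS := Multiset (Finset ℕ)

open Multiset Classical in
section
open scoped Classical

lemma mem_unionC {C : MS} {a : ℕ} : a ∈ unionC C ↔ ∃ A ∈ C, a ∈ A := by
  induction C using Multiset.induction with
  | empty => simp [unionC]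
  | cons A C ih =>
    simp only [unionC, Multiset.sup_cons, Finset.mem_union] at *
    simp [ih]

lemma unionC_add (C D : MS) : unionC (C + D) = unionC C ∪ unionC D := by
  simp [unionC, Multiset.sup_add]

lemma member_subset_unionC {C : MS} {A : Finset ℕ} (h : A ∈ C) : A ⊆ unionC C :=
  Multiset.le_sup h

lemma unionC_map (φ : ℕ → ℕ) (C : MS) :
    unionC (C.map (Finset.image φ)) = Finset.image φ (unionC C) := by
  induction C using Multiset.induction with
  | empty => simp [unionC]
  | cons A C ih => simp [unionC, Multiset.sup_cons, Finset.image_union] at *; rw [ih]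

lemma mem_msum {P : Multiset MS} {X : Finset ℕ} : X ∈ P.sum ↔ ∃ D ∈ P, X ∈ D := by
  induction P using Multiset.induction with
  | empty => simp
  | cons D P ih => simp [Multiset.sum_cons, Multiset.mem_add, ih]

lemma card_msum (P : Multiset MS) : Multiset.card P.sum = (P.map Multiset.card).sum := by
  induction P using Multiset.induction with
  | empty => simp
  | cons D P ih => simp [Multiset.sum_cons, ih]

lemma unionC_msum (P : Multiset MS) : unionC P.sum = (P.map unionC).sup := by
  induction P using Multiset.induction with
  | empty => simp [unionC]
  | cons D P ih =>
    simp only [Multiset.sum_cons, unionC_add, Multiset.map_cons, Multiset.sup_cons]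
    rw [ih]; rfl

end

section Iso
open Multiset

lemma unionC_mono {C D : MS} (h : D ≤ C) : unionC D ⊆ unionC C := by
  intro a ha
  obtain ⟨A, hA, haA⟩ := mem_unionC.mp ha
  exact mem_unionC.mpr ⟨A, Multiset.mem_of_le h hA, haA⟩

lemma iso_refl (C : MS) : Isomorphic C C := by
  refine ⟨id, Set.bijOn_id _, ?_⟩
  rw [Multiset.map_congr rfl fun A _ => Finset.image_id]
  exact Multiset.map_id _

lemma iso_trans {C D E : MS} (h1 : Isomorphic C D) (h2 : Isomorphic D E) : Isomorphic C E := by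
  obtain ⟨φ, hφ, rfl⟩ := h1
  obtain ⟨ψ, hψ, rfl⟩ := h2
  refine ⟨ψ ∘ φ, hψ.comp hφ, ?_⟩
  rw [Multiset.map_map]
  exact Multiset.map_congr rfl fun A _ => (Finset.image_image).symm

lemma iso_symm {C D : MS} (h : Isomorphic C D) : Isomorphic D C := by
  obtain ⟨φ, hφ, rfl⟩ := h
  have hinv := hφ.invOn_invFunOn
  refine ⟨Function.invFunOn φ ↑(unionC C), hφ.symm hinv.symm, ?_⟩
  rw [Multiset.map_map]
  have : ∀ A ∈ C, (Finset.image (Function.invFunOn φ ↑(unionC C)) ∘ Finset.image φ) A = A := by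
    intro A hA
    simp only [Function.comp_apply, Finset.image_image]
    have h2 : Finset.image (fun x => Function.invFunOn φ ↑(unionC C) (φ x)) A
        = Finset.image id A :=
      Finset.image_congr fun x hx => hinv.1 (member_subset_unionC hA hx)
    rw [show (Function.invFunOn φ ↑(unionC C) ∘ φ) = fun x => Function.invFunOn φ ↑(unionC C) (φ x) from rfl, h2]
    exact Finset.image_id
  rw [Multiset.map_congr rfl this]
  exact Multiset.map_id _

lemma iso_card {C D : MS} (h : Isomorphic C D) : Multiset.card D = Multiset.card C := by
  obtain ⟨φ, hφ, rfl⟩ := h; simp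

lemma iso_sizes {C D : MS} {l : ℕ} (h : Isomorphic C D) (hs : ∀ A ∈ C, A.card = l) :
    ∀ A ∈ D, A.card = l := by
  obtain ⟨φ, hφ, rfl⟩ := h
  intro A' hA'
  obtain ⟨A, hA, rfl⟩ := Multiset.mem_map.mp hA'
  rw [Finset.card_image_of_injOn
    (hφ.injOn.mono (Finset.coe_subset.mpr (member_subset_unionC hA)))]
  exact hs A hA

lemma iso_dbl {C D : MS} (h : Isomorphic C D) (hd : IsDoubleCover C) : IsDoubleCover D := by
  classical
  obtain ⟨φ, hφ, rfl⟩ := h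
  intro a' ha'
  rw [unionC_map] at ha'
  obtain ⟨a, ha, rfl⟩ := Finset.mem_image.mp ha'
  rw [Multiset.countP_map]
  have hfil : Multiset.filter (fun A => φ a ∈ Finset.image φ A) C
      = Multiset.filter (fun A => a ∈ A) C := by
    refine Multiset.filter_congr fun A hA => ?_
    constructor
    · rintro hmem
      obtain ⟨x, hx, hxa⟩ := Finset.mem_image.mp hmem
      have hxU : x ∈ (↑(unionC C) : Set ℕ) := by
        exact_mod_cast member_subset_unionC hA hx
      have := hφ.injOn hxU (by exact_mod_cast ha) hxa
      rwa [← this]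
    · intro hmem; exact Finset.mem_image_of_mem _ hmem
  rw [hfil, ← Multiset.countP_eq_card_filter]
  exact hd a ha

lemma iso_connected {C D : MS} (h : Isomorphic C D) (hc : ConnectedColl C) : ConnectedColl D := by
  obtain ⟨φ, hφ, rfl⟩ := h
  intro A' hA' B' hB'
  obtain ⟨A, hA, rfl⟩ := Multiset.mem_map.mp hA'
  obtain ⟨B, hB, rfl⟩ := Multiset.mem_map.mp hB'
  refine Relation.ReflTransGen.lift (Finset.image φ) ?_ _ _ (hc A hA B hB)
  rintro X Y ⟨hX, hY, x, hx⟩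
  rw [Finset.mem_inter] at hx
  exact ⟨Multiset.mem_map_of_mem _ hX, Multiset.mem_map_of_mem _ hY,
    ⟨φ x, Finset.mem_inter.mpr ⟨Finset.mem_image_of_mem _ hx.1, Finset.mem_image_of_mem _ hx.2⟩⟩⟩

def Good (C : MS) : Prop := ∀ A ∈ C, A ≠ ∅

lemma iso_good {C D : MS} (h : Isomorphic C D) (hg : Good C) : Good D := by
  obtain ⟨φ, hφ, rfl⟩ := h
  intro A' hA'
  obtain ⟨A, hA, rfl⟩ := Multiset.mem_map.mp hA'
  have := hg A hA
  intro hcon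
  exact this (Finset.image_eq_empty.mp hcon)

lemma iso_restrict {C : MS} {φ : ℕ → ℕ} (hinj : Set.InjOn φ ↑(unionC C)) {D : MS} (hD : D ≤ C) :
    Isomorphic D (D.map (Finset.image φ)) := by
  refine ⟨φ, ?_, rfl⟩
  rw [unionC_map, Finset.coe_image]
  exact (hinj.mono (Finset.coe_subset.mpr (unionC_mono hD))).bijOn_image

lemma eqvGen_iso {α : Type*} {f : α → MS} {x y : α}
    (h : Relation.EqvGen (fun a b => Isomorphic (f a) (f b)) x y) : Isomorphic (f x) (f y) := by
  induction h with
  | rel _ _ h => exact h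
  | refl => exact iso_refl _
  | symm _ _ _ ih => exact iso_symm ih
  | trans _ _ _ _ _ ih1 ih2 => exact iso_trans ih1 ih2

end Iso

section Canon
open Multiset

noncomputable def canon (C : MS) : MS :=
  (Encodable.decode (sInf (Encodable.encode '' {D | Isomorphic C D}))).getD 0

lemma canon_spec (C : MS) : Isomorphic C (canon C) := by
  have hne : (Encodable.encode '' {D | Isomorphic C D}).Nonempty := ⟨_, ⟨C, iso_refl C, rfl⟩⟩
  obtain ⟨D, hD, henc⟩ := Nat.sInf_mem hne
  unfold canon
  rw [← henc, Encodable.encodek]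
  exact hD

lemma canon_eq_of_iso {C D : MS} (h : Isomorphic C D) : canon C = canon D := by
  unfold canon
  have hset : {E | Isomorphic C E} = {E | Isomorphic D E} :=
    Set.ext fun E => ⟨fun hE => iso_trans (iso_symm h) hE, fun hE => iso_trans h hE⟩
  rw [hset]

lemma canon_idem (C : MS) : canon (canon C) = canon C := (canon_eq_of_iso (canon_spec C)).symm

lemma iso_of_canon_eq {C D : MS} (h : canon C = canon D) : Isomorphic C D :=
  iso_trans (canon_spec C) (h ▸ iso_symm (canon_spec D))

lemma canon_card (C : MS) : Multiset.card (canon C) = Multiset.card C :=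
  iso_card (canon_spec C)

end Canon

section Comp
open Multiset
open scoped Classical

lemma count_msum (X : Finset ℕ) (P : Multiset MS) :
    Multiset.count X P.sum = (P.map (Multiset.count X)).sum := by
  induction P using Multiset.induction with
  | empty => simp
  | cons D P ih => simp [Multiset.sum_cons, ih]

def Rch (C : MS) (A B : Finset ℕ) : Prop :=
  Relation.ReflTransGen (fun X Y => X ∈ C ∧ Y ∈ C ∧ (X ∩ Y).Nonempty) A B

noncomputable def comp (C : MS) (A : Finset ℕ) : MS := C.filter (Rch C A)

lemma mem_comp_self {C : MS} {A : Finset ℕ} (h : A ∈ C) : A ∈ comp C A :=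
  Multiset.mem_filter.mpr ⟨h, Relation.ReflTransGen.refl⟩

lemma rch_in_comp {C : MS} {A B : Finset ℕ} (h : Rch C A B) :
    Relation.ReflTransGen (fun X Y => X ∈ comp C A ∧ Y ∈ comp C A ∧ (X ∩ Y).Nonempty) A B := by
  induction h with
  | refl => exact .refl
  | tail hab hbc ih =>
    refine ih.tail ⟨?_, ?_, hbc.2.2⟩
    · exact Multiset.mem_filter.mpr ⟨hbc.1, hab⟩
    · exact Multiset.mem_filter.mpr ⟨hbc.2.1, hab.tail hbc⟩

lemma comp_isComponent {C : MS} {A : Finset ℕ} (hA : A ∈ C) : IsComponent C (comp C A) := by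
  refine ⟨Multiset.filter_le _ _, ?_, ?_, ?_⟩
  · intro h0
    have := mem_comp_self hA
    rw [h0] at this
    exact absurd this (Multiset.notMem_zero _)
  · intro X hX Y hY
    have hAX := (Multiset.mem_filter.mp hX).2
    have hAY := (Multiset.mem_filter.mp hY).2
    have hsymm : Symmetric (fun X Y : Finset ℕ =>
        X ∈ comp C A ∧ Y ∈ comp C A ∧ (X ∩ Y).Nonempty) := by
      rintro U V ⟨h1, h2, h3⟩
      exact ⟨h2, h1, by rwa [Finset.inter_comm]⟩
    exact ((@Relation.ReflTransGen.stdSymm _ _ ⟨fun a b h => hsymm h⟩).symm _ _ (rch_in_comp hAX)).trans (rch_in_comp hAY)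
  · intro B hB X hX
    by_contra hne
    have hXc := Multiset.mem_filter.mp hX
    have hBC : B ∈ C := Multiset.mem_of_le (Multiset.sub_le_self _ _) hB
    have hRB : Rch C A B := hXc.2.tail ⟨hXc.1, hBC, by
      rw [Finset.nonempty_iff_ne_empty]
      intro h
      exact hne (by rwa [Finset.inter_comm] at h)⟩
    have hcnt : Multiset.count B (C - comp C A) = 0 := by
      unfold comp
      rw [Multiset.count_sub, Multiset.count_filter_of_pos hRB, Nat.sub_self]
    exact absurd (Multiset.count_pos.mpr hB) (by omega)

lemma isComponent_count {C D : MS} (hG : Good C) (hD : IsComponent C D) {X : Finset ℕ}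
    (hX : X ∈ D) : Multiset.count X D = Multiset.count X C := by
  obtain ⟨hle, hne0, hconn, hsep⟩ := hD
  by_contra hne2
  have hlt : Multiset.count X D < Multiset.count X C :=
    lt_of_le_of_ne (Multiset.count_le_of_le X hle) hne2
  have hXsub : X ∈ C - D := by
    rw [← Multiset.count_pos, Multiset.count_sub]
    omega
  have := hsep X hXsub X hX
  rw [Finset.inter_self] at this
  exact hG X (Multiset.mem_of_le hle hX) this

lemma isComponent_eq_comp {C D : MS} (hG : Good C) (h : IsComponent C D) {A : Finset ℕ}
    (hA : A ∈ D) : D = comp C A := by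
  have hsep := h.2.2.2
  have ha : ∀ X ∈ D, Rch C A X := by
    intro X hX
    refine Relation.ReflTransGen.mono ?_ _ _ (h.2.2.1 A hA X hX)
    rintro U V ⟨h1, h2, h3⟩
    exact ⟨Multiset.mem_of_le h.1 h1, Multiset.mem_of_le h.1 h2, h3⟩
  have hb : ∀ X, Rch C A X → X ∈ D := by
    intro X hX
    induction hX with
    | refl => exact hA
    | @tail b c hab hbc ih =>
      by_contra hc
      have hcsub : c ∈ C - D := by
        rw [← Multiset.count_pos, Multiset.count_sub,
          Multiset.count_eq_zero_of_notMem hc]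
        have := Multiset.count_pos.mpr hbc.2.1
        omega
      have := hsep c hcsub b ih
      obtain ⟨x, hx⟩ := hbc.2.2
      rw [Finset.mem_inter] at hx
      have : x ∈ c ∩ b := Finset.mem_inter.mpr ⟨hx.2, hx.1⟩
      rw [hsep c hcsub b ih] at this
      exact absurd this (Finset.notMem_empty x)
  ext X
  unfold comp
  by_cases hX : X ∈ D
  · rw [isComponent_count hG ⟨h.1, h.2.1, h.2.2.1, hsep⟩ hX,
      Multiset.count_filter_of_pos (ha X hX)]
  · rw [Multiset.count_eq_zero_of_notMem hX]
    by_cases hR : Rch C A X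
    · by_cases hXC : X ∈ C
      · exact absurd (hb X hR) hX
      · rw [Multiset.count_filter_of_pos hR, Multiset.count_eq_zero_of_notMem hXC]
    · rw [Multiset.count_filter_of_neg hR]

lemma isComponent_unique {C D E : MS} (hG : Good C) (hD : IsComponent C D)
    (hE : IsComponent C E) {X : Finset ℕ} (hXD : X ∈ D) (hXE : X ∈ E) : D = E := by
  rw [isComponent_eq_comp hG hD hXD, isComponent_eq_comp hG hE hXE]

lemma isComponent_disjoint {C D E : MS} (hG : Good C) (hD : IsComponent C D)
    (hE : IsComponent C E) (hne : D ≠ E) : unionC D ∩ unionC E = ∅ := by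
  by_contra h
  obtain ⟨a, ha⟩ := Finset.nonempty_iff_ne_empty.mpr h
  rw [Finset.mem_inter] at ha
  obtain ⟨A, hA, haA⟩ := mem_unionC.mp ha.1
  obtain ⟨B, hB, haB⟩ := mem_unionC.mp ha.2
  have hBD : B ∉ D := fun hBD => hne (isComponent_unique hG hD hE hBD hB)
  have hBsub : B ∈ C - D := by
    rw [← Multiset.count_pos, Multiset.count_sub, Multiset.count_eq_zero_of_notMem hBD]
    have := Multiset.count_pos.mpr (Multiset.mem_of_le hE.1 hB)
    omega
  have := hD.2.2.2 B hBsub A hA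
  have hmem : a ∈ B ∩ A := Finset.mem_inter.mpr ⟨haB, haA⟩
  rw [this] at hmem
  exact absurd hmem (Finset.notMem_empty a)

noncomputable def CompsMS (C : MS) : Multiset MS := (C.powerset.filter (IsComponent C)).dedup

lemma mem_CompsMS {C D : MS} : D ∈ CompsMS C ↔ IsComponent C D := by
  simp only [CompsMS, Multiset.mem_dedup, Multiset.mem_filter, Multiset.mem_powerset]
  exact ⟨fun h => h.2, fun h => ⟨h.1, h⟩⟩

lemma nodup_CompsMS (C : MS) : (CompsMS C).Nodup := Multiset.nodup_dedup _

lemma sum_CompsMS {C : MS} (hG : Good C) : (CompsMS C).sum = C := by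
  ext X
  rw [count_msum]
  by_cases hX : X ∈ C
  · have hD0 : IsComponent C (comp C X) := comp_isComponent hX
    have hmem : comp C X ∈ CompsMS C := mem_CompsMS.mpr hD0
    rw [← Multiset.cons_erase hmem, Multiset.map_cons, Multiset.sum_cons]
    have hrest : ((CompsMS C).erase (comp C X)).map (Multiset.count X) = Multiset.replicate (Multiset.card ((CompsMS C).erase (comp C X))) 0 := by
      rw [Multiset.eq_replicate]
      refine ⟨by simp, ?_⟩
      intro b hb
      obtain ⟨D, hD, rfl⟩ := Multiset.mem_map.mp hb
      have hDm : D ∈ CompsMS C := Multiset.mem_of_le (Multiset.erase_le _ _) hD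
      have hDne : D ≠ comp C X := by
        intro heq
        rw [heq] at hD
        exact (nodup_CompsMS C).notMem_erase hD
      have hXD : X ∉ D := by
        intro hXD
        exact hDne (isComponent_unique hG (mem_CompsMS.mp hDm) hD0 hXD (mem_comp_self hX))
      exact Multiset.count_eq_zero_of_notMem hXD
    rw [hrest, Multiset.sum_replicate, smul_zero, add_zero]
    exact (isComponent_count hG hD0 (mem_comp_self hX)).trans rfl |>.symm ▸ rfl
  · rw [Multiset.count_eq_zero_of_notMem hX]
    refine (Multiset.sum_eq_zero ?_)
    intro b hb
    obtain ⟨D, hD, rfl⟩ := Multiset.mem_map.mp hb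
    have : X ∉ D := fun hXD => hX (Multiset.mem_of_le (mem_CompsMS.mp hD).1 hXD)
    exact Multiset.count_eq_zero_of_notMem this

end Comp

section Transport
open Multiset
open scoped Classical

lemma isComponent_dbl {C D : MS} (hdc : IsDoubleCover C) (hD : IsComponent C D) :
    IsDoubleCover D := by
  intro a ha
  obtain ⟨A, hA, haA⟩ := mem_unionC.mp ha
  have haC : a ∈ unionC C := unionC_mono hD.1 ha
  have h2 := hdc a haC
  have hz : Multiset.countP (fun X => a ∈ X) (C - D) = 0 := by
    rw [Multiset.countP_eq_zero]
    intro B hB haB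
    have hemp := hD.2.2.2 B hB A hA
    have : a ∈ B ∩ A := Finset.mem_inter.mpr ⟨haB, haA⟩
    rw [hemp] at this
    exact absurd this (Finset.notMem_empty a)
  have hsub := Multiset.countP_sub hD.1 (fun X => a ∈ X)
  have hle := Multiset.countP_le_of_le (fun X => a ∈ X) hD.1
  omega

lemma isComponent_two_le {C D : MS} (hG : Good C) (hdc : IsDoubleCover C)
    (hD : IsComponent C D) : 2 ≤ Multiset.card D := by
  obtain ⟨A, hA⟩ := Multiset.exists_mem_of_ne_zero hD.2.1
  have hAne : A ≠ ∅ := hG A (Multiset.mem_of_le hD.1 hA)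
  obtain ⟨a, haA⟩ := Finset.nonempty_iff_ne_empty.mpr hAne
  have ha : a ∈ unionC D := mem_unionC.mpr ⟨A, hA, haA⟩
  have := isComponent_dbl hdc hD a ha
  have := Multiset.countP_le_card (fun X => a ∈ X) D
  omega

lemma sum_card_eq (D : MS) :
    (D.map Finset.card).sum = ∑ a ∈ unionC D, Multiset.countP (fun A => a ∈ A) D := by
  induction D using Multiset.induction with
  | empty => simp [unionC]
  | cons A D ih =>
    have hu : unionC (A ::ₘ D) = A ∪ unionC D := by
      simp [unionC, Multiset.sup_cons]
    have hc : ∀ a : ℕ, Multiset.countP (fun X => a ∈ X) (A ::ₘ D)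
        = Multiset.countP (fun X => a ∈ X) D + if a ∈ A then 1 else 0 :=
      fun a => Multiset.countP_cons _ _ _
    simp only [Multiset.map_cons, Multiset.sum_cons, hu]
    rw [Finset.sum_congr rfl (fun a _ => hc a), Finset.sum_add_distrib]
    have h1 : ∑ a ∈ A ∪ unionC D, Multiset.countP (fun X => a ∈ X) D
        = ∑ a ∈ unionC D, Multiset.countP (fun X => a ∈ X) D := by
      symm
      refine Finset.sum_subset Finset.subset_union_right ?_
      intro x _ hx
      rw [Multiset.countP_eq_zero]
      intro B hB hxB
      exact hx (mem_unionC.mpr ⟨B, hB, hxB⟩)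
    have h2 : ∑ a ∈ A ∪ unionC D, (if a ∈ A then 1 else 0) = A.card := by
      rw [Finset.sum_ite_mem, Finset.union_inter_cancel_left]
      simp
    rw [h1, h2, ih]
    omega

lemma dbl_weight_even {D : MS} {l : ℕ} (hdc : IsDoubleCover D) (hs : ∀ A ∈ D, A.card = l) :
    l * Multiset.card D = 2 * (unionC D).card := by
  have h1 : (D.map Finset.card).sum = l * Multiset.card D := by
    have : D.map Finset.card = Multiset.replicate (Multiset.card D) l := by
      rw [Multiset.eq_replicate]
      refine ⟨by simp, ?_⟩
      intro b hb
      obtain ⟨A, hA, rfl⟩ := Multiset.mem_map.mp hb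
      exact hs A hA
    rw [this, Multiset.sum_replicate, smul_eq_mul, mul_comm]
  have h2 : ∑ a ∈ unionC D, Multiset.countP (fun A => a ∈ A) D
      = ∑ _a ∈ unionC D, 2 := Finset.sum_congr rfl fun a ha => hdc a ha
  rw [← h1, sum_card_eq, h2, Finset.sum_const, smul_eq_mul, mul_comm]

lemma image_eq_of_injOn {φ : ℕ → ℕ} {U : Finset ℕ} (hinj : Set.InjOn φ ↑U)
    {A B : Finset ℕ} (hA : A ⊆ U) (hB : B ⊆ U) (h : A.image φ = B.image φ) : A = B := by
  ext x
  constructor <;> intro hx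
  · have : φ x ∈ B.image φ := h ▸ Finset.mem_image_of_mem _ hx
    obtain ⟨y, hy, hxy⟩ := Finset.mem_image.mp this
    rwa [hinj (Finset.mem_coe.mpr (hB hy)) (Finset.mem_coe.mpr (hA hx)) hxy] at hy
  · have : φ x ∈ A.image φ := h ▸ Finset.mem_image_of_mem _ hx
    obtain ⟨y, hy, hxy⟩ := Finset.mem_image.mp this
    rwa [hinj (Finset.mem_coe.mpr (hA hy)) (Finset.mem_coe.mpr (hB hx)) hxy] at hy

lemma count_image_map {φ : ℕ → ℕ} {U : Finset ℕ} (hinj : Set.InjOn φ ↑U) {E : MS}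
    (hE : ∀ A ∈ E, A ⊆ U) {B : Finset ℕ} (hB : B ⊆ U) :
    Multiset.count (B.image φ) (E.map (Finset.image φ)) = Multiset.count B E := by
  rw [Multiset.count_map]
  have : Multiset.filter (fun A => B.image φ = A.image φ) E
      = Multiset.filter (fun A => B = A) E := by
    refine Multiset.filter_congr fun A hA => ?_
    constructor
    · intro h; exact image_eq_of_injOn hinj hB (hE A hA) h
    · intro h; rw [h]
  rw [this, ← Multiset.count_eq_card_filter_eq]

lemma map_image_comp_eq {f g : ℕ → ℕ} {U : Finset ℕ} (hfg : ∀ x ∈ U, g (f x) = x)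
    {D : MS} (hmem : ∀ A ∈ D, A ⊆ U) :
    (D.map (Finset.image f)).map (Finset.image g) = D := by
  rw [Multiset.map_map]
  have : ∀ A ∈ D, (Finset.image g ∘ Finset.image f) A = A := by
    intro A hA
    simp only [Function.comp_apply, Finset.image_image]
    have h2 : Finset.image (fun x => g (f x)) A = Finset.image id A :=
      Finset.image_congr fun x hx => hfg x (hmem A hA hx)
    rw [show (g ∘ f) = fun x => g (f x) from rfl, h2]
    exact Finset.image_id
  rw [Multiset.map_congr rfl this]
  exact Multiset.map_id _

lemma isComponent_map {C C' : MS} (φ : ℕ → ℕ)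
    (hφ : Set.BijOn φ ↑(unionC C) ↑(unionC C'))
    (hmap : C.map (Finset.image φ) = C') {D : MS} (hD : IsComponent C D) :
    IsComponent C' (D.map (Finset.image φ)) := by
  obtain ⟨hle, hne0, hconn, hsep⟩ := hD
  have hmemC : ∀ A ∈ C, A ⊆ unionC C := fun A hA => member_subset_unionC hA
  have hmemD : ∀ A ∈ D, A ⊆ unionC C := fun A hA => member_subset_unionC (Multiset.mem_of_le hle hA)
  refine ⟨?_, ?_, ?_, ?_⟩
  · rw [← hmap]; exact Multiset.map_le_map hle
  · rw [Ne, Multiset.map_eq_zero]; exact hne0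
  · exact iso_connected (iso_restrict hφ.injOn hle) hconn
  · intro B' hB' A' hA'
    obtain ⟨A, hA, rfl⟩ := Multiset.mem_map.mp hA'
    have hB'C : B' ∈ C' := Multiset.mem_of_le (Multiset.sub_le_self _ _) hB'
    rw [← hmap] at hB'C
    obtain ⟨B, hB, rfl⟩ := Multiset.mem_map.mp hB'C
    have hcnt : 0 < Multiset.count (B.image φ) (C' - D.map (Finset.image φ)) :=
      Multiset.count_pos.mpr hB'
    rw [Multiset.count_sub] at hcnt
    have hcc : Multiset.count (B.image φ) C' = Multiset.count B C := by
      rw [← hmap]; exact count_image_map hφ.injOn hmemC (hmemC B hB)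
    have hcd : Multiset.count (B.image φ) (D.map (Finset.image φ)) = Multiset.count B D :=
      count_image_map hφ.injOn hmemD (hmemC B hB)
    have hBCD : B ∈ C - D := by
      rw [← Multiset.count_pos, Multiset.count_sub]
      omega
    have hemp := hsep B hBCD A hA
    by_contra hne
    obtain ⟨b, hb⟩ := Finset.nonempty_iff_ne_empty.mpr hne
    rw [Finset.mem_inter] at hb
    obtain ⟨x, hx, hxb⟩ := Finset.mem_image.mp hb.1
    obtain ⟨y, hy, hyb⟩ := Finset.mem_image.mp hb.2
    have hxy : x = y := hφ.injOn (Finset.mem_coe.mpr (hmemC B hB hx))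
      (Finset.mem_coe.mpr (hmemD A hA hy)) (by rw [hxb, hyb])
    have : x ∈ B ∩ A := Finset.mem_inter.mpr ⟨hx, hxy ▸ hy⟩
    rw [hemp] at this
    exact absurd this (Finset.notMem_empty x)

lemma compsMS_map {C C' : MS} (φ : ℕ → ℕ)
    (hφ : Set.BijOn φ ↑(unionC C) ↑(unionC C'))
    (hmap : C.map (Finset.image φ) = C') :
    CompsMS C' = (CompsMS C).map (Multiset.map (Finset.image φ)) := by
  classical
  set ψ := Function.invFunOn φ ↑(unionC C) with hψdef
  have hinv : Set.InvOn ψ φ ↑(unionC C) ↑(unionC C') := by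
    have := (show Set.BijOn φ ↑(unionC C) ↑(unionC (C.map (Finset.image φ))) by
      rw [hmap]; exact hφ).invOn_invFunOn
    rw [hmap] at this
    exact this
  have hψbij : Set.BijOn ψ ↑(unionC C') ↑(unionC C) := hφ.symm hinv.symm
  have hmemC : ∀ A ∈ C, A ⊆ unionC C := fun A hA => member_subset_unionC hA
  have hmemC' : ∀ A ∈ C', A ⊆ unionC C' := fun A hA => member_subset_unionC hA
  have hmapψ : C'.map (Finset.image ψ) = C := by
    rw [← hmap]
    exact map_image_comp_eq hinv.1 hmemC
  have hrt : ∀ D : MS, D ≤ C → (D.map (Finset.image φ)).map (Finset.image ψ) = D :=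
    fun D hle => map_image_comp_eq hinv.1 (fun A hA => member_subset_unionC (Multiset.mem_of_le hle hA))
  have hrt' : ∀ E : MS, E ≤ C' → (E.map (Finset.image ψ)).map (Finset.image φ) = E :=
    fun E hle => map_image_comp_eq hinv.2 (fun A hA => member_subset_unionC (Multiset.mem_of_le hle hA))
  refine ((nodup_CompsMS C').ext ?_).mpr ?_
  · refine Multiset.Nodup.map_on ?_ (nodup_CompsMS C)
    intro D hD D' hD' heq
    have h1 := hrt D (mem_CompsMS.mp hD).1
    have h2 := hrt D' (mem_CompsMS.mp hD').1
    rw [← h1, ← h2, heq]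
  · intro E
    rw [mem_CompsMS]
    constructor
    · intro hE
      refine Multiset.mem_map.mpr ⟨E.map (Finset.image ψ), ?_, hrt' E hE.1⟩
      rw [mem_CompsMS]
      exact isComponent_map ψ hψbij hmapψ hE
    · intro hE
      obtain ⟨D, hD, rfl⟩ := Multiset.mem_map.mp hE
      exact isComponent_map φ hφ hmap (mem_CompsMS.mp hD)

lemma compsMS_map_canon {C C' : MS} (h : Isomorphic C C') :
    (CompsMS C').map canon = (CompsMS C).map canon := by
  obtain ⟨φ, hφ, hmap⟩ := h
  rw [compsMS_map φ hφ hmap, Multiset.map_map]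
  refine Multiset.map_congr rfl fun D hD => ?_
  exact (canon_eq_of_iso (iso_restrict hφ.injOn (mem_CompsMS.mp hD).1)).symm

end Transport

section Zconstr
open Multiset
open scoped Classical

def zoff (l i : ℕ) : ℕ := (i * l + 1) / 2
def zblock (l i : ℕ) : Finset ℕ := Finset.Ico (zoff l i) (zoff l (i + 1))
def zset (l W i : ℕ) : Finset ℕ := zblock l i ∪ zblock l ((i + 1) % W)
def Z (l W : ℕ) : MS := (Multiset.range W).map (zset l W)

lemma zoff_mono (l : ℕ) {i j : ℕ} (h : i ≤ j) : zoff l i ≤ zoff l j := by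
  unfold zoff
  have := Nat.mul_le_mul_right l h
  omega

lemma zoff_lt (l : ℕ) (hl : 2 ≤ l) {i j : ℕ} (h : i < j) : zoff l i < zoff l j := by
  have h2 : zoff l i < zoff l (i + 1) := by
    unfold zoff
    have e1 : (i + 1) * l = i * l + l := by ring
    omega
  have h3 : zoff l (i + 1) ≤ zoff l j := zoff_mono l h
  omega

lemma mem_zblock_unique {l : ℕ} (hl : 2 ≤ l) {a i j : ℕ} (hi : a ∈ zblock l i)
    (hj : a ∈ zblock l j) : i = j := by
  rw [zblock, Finset.mem_Ico] at hi hj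
  by_contra h
  rcases Nat.lt_or_ge i j with hlt | hge
  · have := zoff_mono l (show i + 1 ≤ j by omega)
    omega
  · have hlt : j < i := by omega
    have := zoff_mono l (show j + 1 ≤ i by omega)
    omega

lemma zblock_disjoint {l : ℕ} (hl : 2 ≤ l) {i j : ℕ} (hij : i ≠ j) :
    Disjoint (zblock l i) (zblock l j) := by
  rw [Finset.disjoint_left]
  intro a ha hb
  exact hij (mem_zblock_unique hl ha hb)

lemma card_zblock (l i : ℕ) : (zblock l i).card = zoff l (i + 1) - zoff l i :=
  Nat.card_Ico _ _

lemma card_zset {l W : ℕ} (hl : 3 ≤ l) (hW : 2 ≤ W) (hpar : l * W % 2 = 0) {i : ℕ}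
    (hi : i < W) : (zset l W i).card = l := by
  unfold zset
  rcases Nat.lt_or_ge (i + 1) W with h1 | h1
  · rw [Nat.mod_eq_of_lt h1,
      Finset.card_union_of_disjoint (zblock_disjoint (by omega) (by omega)),
      card_zblock, card_zblock]
    unfold zoff
    have e1 : (i + 1) * l = i * l + l := by ring
    have e2 : (i + 1 + 1) * l = i * l + 2 * l := by ring
    omega
  · have hiW : i + 1 = W := by omega
    have hmod : (i + 1) % W = 0 := by rw [hiW, Nat.mod_self]
    rw [hmod,
      Finset.card_union_of_disjoint (zblock_disjoint (by omega) (show i ≠ 0 by omega)),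
      card_zblock, card_zblock]
    unfold zoff
    have e1 : (0 + 1) * l = l := by ring
    have e2 : (i + 1) * l = i * l + l := by ring
    have e3 : i * l + l = l * W := by
      calc i * l + l = (i + 1) * l := by ring
      _ = W * l := by rw [hiW]
      _ = l * W := Nat.mul_comm _ _
    have e0 : 0 * l = 0 := by ring
    omega

lemma card_Z (l W : ℕ) : Multiset.card (Z l W) = W := by simp [Z]

lemma mem_Z {l W : ℕ} {A : Finset ℕ} : A ∈ Z l W ↔ ∃ i < W, A = zset l W i := by
  simp only [Z, Multiset.mem_map, Multiset.mem_range]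
  exact ⟨fun ⟨i, hi, h⟩ => ⟨i, hi, h.symm⟩, fun ⟨i, hi, h⟩ => ⟨i, hi, h.symm⟩⟩

lemma unionC_Z_mem {l W a : ℕ} (hW : 0 < W) (h : a ∈ unionC (Z l W)) :
    ∃ j < W, a ∈ zblock l j := by
  obtain ⟨A, hA, haA⟩ := mem_unionC.mp h
  obtain ⟨i, hi, rfl⟩ := mem_Z.mp hA
  rcases Finset.mem_union.mp haA with h | h
  · exact ⟨i, hi, h⟩
  · exact ⟨(i + 1) % W, Nat.mod_lt _ hW, h⟩

lemma Z_dbl {l W : ℕ} (hl : 3 ≤ l) (hW : 2 ≤ W) : IsDoubleCover (Z l W) := by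
  intro a ha
  obtain ⟨j, hj, haj⟩ := unionC_Z_mem (by omega) ha
  set j' := (j + (W - 1)) % W with hj'def
  have hj'W : j' < W := Nat.mod_lt _ (by omega)
  have hj'val : j' = if j = 0 then W - 1 else j - 1 := by
    rcases Nat.eq_zero_or_pos j with h0 | hpos
    · simp [hj'def, h0, Nat.mod_eq_of_lt (show W - 1 < W by omega)]
    · have : j + (W - 1) = W + (j - 1) := by omega
      rw [hj'def, this, Nat.add_mod_left, Nat.mod_eq_of_lt (by omega), if_neg (by omega)]
  have hj'succ : (j' + 1) % W = j := by
    rcases Nat.eq_zero_or_pos j with h0 | hpos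
    · rw [hj'val]; simp [h0]
      rw [show W - 1 + 1 = W by omega, Nat.mod_self]
    · rw [hj'val, if_neg (by omega), show j - 1 + 1 = j by omega, Nat.mod_eq_of_lt hj]
  have hjj' : j ≠ j' := by
    rw [hj'val]
    split <;> omega
  have hiff : ∀ i, i < W → (a ∈ zset l W i ↔ (i = j ∨ i = j')) := by
    intro i hi
    constructor
    · intro hmem
      rcases Finset.mem_union.mp hmem with h | h
      · exact Or.inl (mem_zblock_unique (by omega) h haj)
      · right
        have hij : (i + 1) % W = j := mem_zblock_unique (by omega) h haj
        rcases Nat.lt_or_ge (i + 1) W with hlt | hge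
        · rw [Nat.mod_eq_of_lt hlt] at hij
          rw [hj'val, if_neg (by omega)]
          omega
        · have hiw : i + 1 = W := by omega
          rw [hiw, Nat.mod_self] at hij
          rw [hj'val, if_pos hij.symm]
          omega
    · intro h
      rcases h with rfl | rfl
      · exact Finset.mem_union_left _ haj
      · refine Finset.mem_union_right _ ?_
        rw [hj'succ]
        exact haj
  unfold Z
  rw [Multiset.countP_map]
  have hfe : Multiset.filter (fun i => a ∈ zset l W i) (Multiset.range W)
      = Multiset.filter (fun i => i = j ∨ i = j') (Multiset.range W) :=
    Multiset.filter_congr fun i hi => by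
      have := hiff i (Multiset.mem_range.mp hi)
      exact ⟨this.mp, this.mpr⟩
  rw [hfe]
  have hfin : Multiset.filter (fun i => i = j ∨ i = j') (Multiset.range W)
      = (Finset.filter (fun i => i = j ∨ i = j') (Finset.range W)).val := by
    rw [Finset.filter_val, Finset.range_val]
  rw [hfin]
  have : Finset.filter (fun i => i = j ∨ i = j') (Finset.range W) = {j, j'} := by
    ext i
    simp only [Finset.mem_filter, Finset.mem_range, Finset.mem_insert, Finset.mem_singleton]
    constructor
    · rintro ⟨_, h⟩; exact h
    · rintro (rfl | rfl)
      · exact ⟨hj, Or.inl rfl⟩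
      · exact ⟨hj'W, Or.inr rfl⟩
  rw [this]
  show ({j, j'} : Finset ℕ).card = 2
  rw [Finset.card_insert_of_notMem (by simp [hjj']), Finset.card_singleton]

lemma Z_connected {l W : ℕ} (hl : 3 ≤ l) (hW : 2 ≤ W) : ConnectedColl (Z l W) := by
  set rel := fun X Y : Finset ℕ => X ∈ Z l W ∧ Y ∈ Z l W ∧ (X ∩ Y).Nonempty with hreldef
  have hrel : ∀ i, i + 1 < W → rel (zset l W i) (zset l W (i + 1)) := by
    intro i h
    have hblk : zoff l (i + 1) ∈ zblock l (i + 1) :=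
      Finset.mem_Ico.mpr ⟨le_refl _, zoff_lt l (by omega) (by omega)⟩
    refine ⟨mem_Z.mpr ⟨i, by omega, rfl⟩, mem_Z.mpr ⟨i + 1, h, rfl⟩, ?_⟩
    refine ⟨zoff l (i + 1), Finset.mem_inter.mpr ⟨?_, Finset.mem_union_left _ hblk⟩⟩
    exact Finset.mem_union_right _ (by rw [Nat.mod_eq_of_lt h]; exact hblk)
  have hchain : ∀ i, i < W → Relation.ReflTransGen rel (zset l W 0) (zset l W i) := by
    intro i
    induction i with
    | zero => intro _; exact .refl
    | succ n ih => intro h; exact (ih (by omega)).tail (hrel n h)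
  intro A hA B hB
  obtain ⟨i, hi, rfl⟩ := mem_Z.mp hA
  obtain ⟨k, hk, rfl⟩ := mem_Z.mp hB
  have hsymm : Symmetric rel := by
    rintro U V ⟨h1, h2, h3⟩
    exact ⟨h2, h1, by rwa [Finset.inter_comm]⟩
  exact ((@Relation.ReflTransGen.stdSymm _ _ ⟨fun a b h => hsymm h⟩).symm _ _ (hchain i hi)).trans (hchain k hk)

lemma Z_good {l W : ℕ} (hl : 3 ≤ l) (hW : 2 ≤ W) (hpar : l * W % 2 = 0) : Good (Z l W) := by
  intro A hA
  obtain ⟨i, hi, rfl⟩ := mem_Z.mp hA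
  intro h
  have := card_zset hl hW hpar hi
  rw [h] at this
  simp at this
  omega

end Zconstr

section Place
open Multiset
open scoped Classical

def place (s : ℕ) (T : MS) : MS := T.map (Finset.image (· + s))

lemma place_iso (s : ℕ) (T : MS) : Isomorphic T (place s T) :=
  iso_restrict (fun x _ y _ h => by omega) (le_refl T)

lemma unionC_place_lb {s : ℕ} {T : MS} {a : ℕ} (h : a ∈ unionC (place s T)) : s ≤ a := by
  unfold place at h
  rw [unionC_map] at h
  obtain ⟨x, _, rfl⟩ := Finset.mem_image.mp h
  omega

lemma unionC_place_ub {s : ℕ} {T : MS} {a : ℕ} (h : a ∈ unionC (place s T)) :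
    a ≤ s + (unionC T).sup id := by
  unfold place at h
  rw [unionC_map] at h
  obtain ⟨x, hx, rfl⟩ := Finset.mem_image.mp h
  have : id x ≤ (unionC T).sup id := Finset.le_sup hx
  simp at this
  omega

def placeL : List MS → ℕ → List MS
  | [], _ => []
  | T :: ts, s => place s T :: placeL ts (s + (unionC T).sup id + 1)

lemma placeL_lb : ∀ (ts : List MS) (s : ℕ), ∀ X ∈ placeL ts s, ∀ a ∈ unionC X, s ≤ a := by
  intro ts
  induction ts with
  | nil => intro s X hX; simp [placeL] at hX
  | cons T ts ih =>
    intro s X hX a ha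
    rcases List.mem_cons.mp hX with rfl | hX
    · exact unionC_place_lb ha
    · have := ih _ X hX a ha
      omega

lemma placeL_forall₂ : ∀ (ts : List MS) (s : ℕ), List.Forall₂ Isomorphic ts (placeL ts s) := by
  intro ts
  induction ts with
  | nil => intro s; exact List.Forall₂.nil
  | cons T ts ih => intro s; exact List.Forall₂.cons (place_iso s T) (ih _)

lemma placeL_pairwise : ∀ (ts : List MS) (s : ℕ),
    List.Pairwise (fun X Y => unionC X ∩ unionC Y = ∅) (placeL ts s) := by
  intro ts
  induction ts with
  | nil => intro s; exact List.Pairwise.nil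
  | cons T ts ih =>
    intro s
    refine List.Pairwise.cons ?_ (ih _)
    intro Y hY
    rw [Finset.eq_empty_iff_forall_notMem]
    intro a ha
    rw [Finset.mem_inter] at ha
    have h1 := unionC_place_ub ha.1
    have h2 := placeL_lb ts _ Y hY a ha.2
    omega

lemma placeL_map_canon : ∀ (ts : List MS) (s : ℕ),
    (placeL ts s).map canon = ts.map canon := by
  intro ts
  induction ts with
  | nil => intro s; rfl
  | cons T ts ih =>
    intro s
    simp only [placeL, List.map_cons, ih]
    rw [(canon_eq_of_iso (place_iso s T)).symm]

lemma comps_of_sum {P : Multiset MS} (hnd : P.Nodup)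
    (hconn : ∀ D ∈ P, ConnectedColl D) (hne : ∀ D ∈ P, D ≠ 0) (hG : ∀ D ∈ P, Good D)
    (hdisj : ∀ D ∈ P, ∀ E ∈ P, D ≠ E → unionC D ∩ unionC E = ∅) :
    CompsMS P.sum = P := by
  have hGsum : Good P.sum := by
    intro A hA
    obtain ⟨D, hD, hAD⟩ := mem_msum.mp hA
    exact hG D hD A hAD
  have hcompP : ∀ D ∈ P, IsComponent P.sum D := by
    intro D hD
    refine ⟨?_, hne D hD, hconn D hD, ?_⟩
    · rw [← Multiset.cons_erase hD, Multiset.sum_cons]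
      exact Multiset.le_add_right _ _
    · intro B hB A hA
      have hrest : P.sum - D = (P.erase D).sum := by
        have hps : P.sum = D + (P.erase D).sum := by
          rw [← Multiset.sum_cons, Multiset.cons_erase hD]
        rw [hps, add_tsub_cancel_left]
      rw [hrest] at hB
      obtain ⟨E, hE, hBE⟩ := mem_msum.mp hB
      have hEP : E ∈ P := Multiset.mem_of_le (Multiset.erase_le _ _) hE
      have hED : E ≠ D := by
        intro h
        rw [h] at hE
        exact hnd.notMem_erase hE
      have hdis := hdisj E hEP D hD hED
      rw [Finset.eq_empty_iff_forall_notMem]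
      intro x hx
      rw [Finset.mem_inter] at hx
      have : x ∈ unionC E ∩ unionC D := Finset.mem_inter.mpr
        ⟨mem_unionC.mpr ⟨B, hBE, hx.1⟩, mem_unionC.mpr ⟨A, hA, hx.2⟩⟩
      rw [hdis] at this
      exact absurd this (Finset.notMem_empty x)
  refine ((nodup_CompsMS _).ext hnd).mpr ?_
  intro D
  rw [mem_CompsMS]
  constructor
  · intro hD
    obtain ⟨A, hA⟩ := Multiset.exists_mem_of_ne_zero hD.2.1
    have hAsum : A ∈ P.sum := Multiset.mem_of_le hD.1 hA
    obtain ⟨E, hE, hAE⟩ := mem_msum.mp hAsum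
    have := isComponent_unique hGsum hD (hcompP E hE) hA hAE
    exact this ▸ hE
  · exact hcompP D

lemma rel_of_map_eq_map {α β : Type*} {f : α → β} :
    ∀ {s t : Multiset α}, s.map f = t.map f → Multiset.Rel (fun a b => f a = f b) s t := by
  intro s
  induction s using Multiset.induction with
  | empty =>
    intro t h
    rw [Multiset.map_zero] at h
    have : t = 0 := Multiset.map_eq_zero.mp h.symm
    rw [this]
    exact Multiset.Rel.zero
  | cons a s ih =>
    intro t h
    have hmem : f a ∈ t.map f := by
      rw [← h]
      simp
    obtain ⟨b, hb, hfb⟩ := Multiset.mem_map.mp hmem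
    have hs : s.map f = (t.erase b).map f := by
      have ht : t = b ::ₘ t.erase b := (Multiset.cons_erase hb).symm
      rw [ht, Multiset.map_cons, Multiset.map_cons, hfb] at h
      exact (Multiset.cons_inj_right _).mp h
    have := Multiset.Rel.cons (r := fun a b => f a = f b) hfb.symm (ih hs)
    rwa [Multiset.cons_erase hb] at this

lemma iso_add_of_disj {C1 C2 D1 D2 : MS} (h1 : Isomorphic C1 D1) (h2 : Isomorphic C2 D2)
    (hs : unionC C1 ∩ unionC C2 = ∅) (ht : unionC D1 ∩ unionC D2 = ∅) :
    Isomorphic (C1 + C2) (D1 + D2) := by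
  classical
  obtain ⟨φ1, hφ1, rfl⟩ := h1
  obtain ⟨φ2, hφ2, rfl⟩ := h2
  set φ := fun x => if x ∈ unionC C1 then φ1 x else φ2 x with hφdef
  have heq1 : Set.EqOn φ φ1 ↑(unionC C1) := by
    intro x hx
    simp only [hφdef]
    rw [if_pos (Finset.mem_coe.mp hx)]
  have heq2 : Set.EqOn φ φ2 ↑(unionC C2) := by
    intro x hx
    have hnx : x ∉ unionC C1 := by
      intro h
      have : x ∈ unionC C1 ∩ unionC C2 := Finset.mem_inter.mpr ⟨h, Finset.mem_coe.mp hx⟩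
      rw [hs] at this
      exact absurd this (Finset.notMem_empty x)
    simp only [hφdef]
    rw [if_neg hnx]
  have hd12 : Disjoint (↑(unionC C1) : Set ℕ) ↑(unionC C2) := by
    rw [Finset.disjoint_coe]
    exact Finset.disjoint_iff_inter_eq_empty.mpr hs
  have htd : Disjoint (↑(unionC (C1.map (Finset.image φ1))) : Set ℕ)
      ↑(unionC (C2.map (Finset.image φ2))) := by
    rw [Finset.disjoint_coe]
    exact Finset.disjoint_iff_inter_eq_empty.mpr ht
  have hb1 : Set.BijOn φ ↑(unionC C1) ↑(unionC (C1.map (Finset.image φ1))) :=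
    hφ1.congr heq1.symm
  have hb2 : Set.BijOn φ ↑(unionC C2) ↑(unionC (C2.map (Finset.image φ2))) :=
    hφ2.congr heq2.symm
  refine ⟨φ, ?_, ?_⟩
  · rw [unionC_add, unionC_add, Finset.coe_union, Finset.coe_union]
    refine Set.BijOn.union hb1 hb2 ?_
    rw [Set.injOn_union hd12]
    refine ⟨hb1.injOn, hb2.injOn, ?_⟩
    intro x hx y hy hxy
    exact Set.disjoint_left.mp htd (hxy ▸ hb1.mapsTo hx) (hb2.mapsTo hy)
  · rw [Multiset.map_add]
    congr 1
    · refine Multiset.map_congr rfl fun A hA => ?_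
      exact Finset.image_congr fun x hx => heq1 (member_subset_unionC hA hx)
    · refine Multiset.map_congr rfl fun A hA => ?_
      exact Finset.image_congr fun x hx => heq2 (member_subset_unionC hA hx)

lemma iso_sum_of_rel : ∀ {P Q : Multiset MS}, Multiset.Rel Isomorphic P Q →
    P.Nodup → Q.Nodup →
    (∀ D ∈ P, ∀ E ∈ P, D ≠ E → unionC D ∩ unionC E = ∅) →
    (∀ D ∈ Q, ∀ E ∈ Q, D ≠ E → unionC D ∩ unionC E = ∅) →
    Isomorphic P.sum Q.sum := by
  intro P Q h
  induction h with
  | zero =>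
    intro _ _ _ _
    simpa using iso_refl 0
  | @cons D E P' Q' hDE hrel ih =>
    intro hndP hndQ hdP hdQ
    have key : ∀ (X : MS) (R : Multiset MS), X ∉ R →
        (∀ D' ∈ X ::ₘ R, ∀ E' ∈ X ::ₘ R, D' ≠ E' → unionC D' ∩ unionC E' = ∅) →
        unionC X ∩ unionC R.sum = ∅ := by
      intro X R hXR hd
      rw [Finset.eq_empty_iff_forall_notMem]
      intro a ha
      rw [Finset.mem_inter] at ha
      obtain ⟨A, hA, haA⟩ := mem_unionC.mp ha.2
      obtain ⟨E', hE', hAE'⟩ := mem_msum.mp hA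
      have hne : X ≠ E' := fun h => hXR (h ▸ hE')
      have hemp := hd X (Multiset.mem_cons_self _ _) E' (Multiset.mem_cons_of_mem hE') hne
      have : a ∈ unionC X ∩ unionC E' :=
        Finset.mem_inter.mpr ⟨ha.1, mem_unionC.mpr ⟨A, hAE', haA⟩⟩
      rw [hemp] at this
      exact absurd this (Finset.notMem_empty a)
    have h1 := key D P' (Multiset.nodup_cons.mp hndP).1 hdP
    have h2 := key E Q' (Multiset.nodup_cons.mp hndQ).1 hdQ
    rw [Multiset.sum_cons, Multiset.sum_cons]
    refine iso_add_of_disj hDE ?_ h1 h2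
    exact ih (Multiset.nodup_cons.mp hndP).2 (Multiset.nodup_cons.mp hndQ).2
      (fun D' hD' E' hE' hne => hdP D' (Multiset.mem_cons_of_mem hD') E' (Multiset.mem_cons_of_mem hE') hne)
      (fun D' hD' E' hE' hne => hdQ D' (Multiset.mem_cons_of_mem hD') E' (Multiset.mem_cons_of_mem hE') hne)

end Place

section Absorb
open Multiset
open scoped Classical

noncomputable def absorbN (l : ℕ) : ℕ → Multiset MS → ℕ → Multiset MS × ℕ
  | 0, K, W => (K, W)
  | (n+1), K, W =>
    if h : ∃ T ∈ K, Isomorphic (Z l W) T then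
      absorbN l n (K.erase h.choose) (W + W)
    else (K, W)

lemma absorbN_spec (l : ℕ) : ∀ (n : ℕ) (K : Multiset MS) (W : ℕ),
    Multiset.card K ≤ n → (∀ T ∈ K, canon T = T) → K.Nodup →
    ∃ a : ℕ,
      (absorbN l n K W).2 = W * 2 ^ a ∧
      (absorbN l n K W).1 + (Multiset.range a).map (fun j => canon (Z l (W * 2 ^ j))) = K ∧
      (¬ ∃ T ∈ (absorbN l n K W).1, Isomorphic (Z l ((absorbN l n K W).2)) T) ∧
      (∀ T ∈ (absorbN l n K W).1, T ∈ K) := by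
  intro n
  induction n with
  | zero =>
    intro K W hcard hcanon hnd
    have hK : K = 0 := Multiset.card_eq_zero.mp (Nat.le_antisymm hcard (Nat.zero_le _))
    subst hK
    exact ⟨0, by simp [absorbN], by simp [absorbN], by simp [absorbN], by simp [absorbN]⟩
  | succ n ih =>
    intro K W hcard hcanon hnd
    by_cases h : ∃ T ∈ K, Isomorphic (Z l W) T
    · have hstep : absorbN l (n + 1) K W = absorbN l n (K.erase h.choose) (W + W) := by
        rw [absorbN, dif_pos h]
      rw [hstep]
      have hT0K : h.choose ∈ K := h.choose_spec.1
      have hT0iso : Isomorphic (Z l W) h.choose := h.choose_spec.2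
      have hT0canon : h.choose = canon (Z l W) := by
        rw [← hcanon h.choose hT0K]
        exact (canon_eq_of_iso hT0iso).symm
      have hcard' : Multiset.card (K.erase h.choose) ≤ n := by
        rw [Multiset.card_erase_of_mem hT0K]
        have := Multiset.card_pos_iff_exists_mem.mpr ⟨h.choose, hT0K⟩
        have hp : (Multiset.card K).pred = Multiset.card K - 1 := rfl
        omega
      obtain ⟨a, h1, h2, h3, h4⟩ := ih (K.erase h.choose) (W + W) hcard'
        (fun T hT => hcanon T (Multiset.mem_of_le (Multiset.erase_le _ _) hT))
        (hnd.erase _)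
      have harith : ∀ j : ℕ, W * 2 ^ (j + 1) = (W + W) * 2 ^ j := by
        intro j; ring
      refine ⟨a + 1, ?_, ?_, ?_, ?_⟩
      · rw [h1, harith]
      · have hrange : (Multiset.range (a + 1) : Multiset ℕ)
            = 0 ::ₘ (Multiset.range a).map Nat.succ := by
          have hl := List.range_succ_eq_map (n := a)
          show ((List.range (a + 1) : List ℕ) : Multiset ℕ) = _
          rw [hl]
          rfl
        rw [hrange, Multiset.map_cons, Multiset.map_map]
        have hf0 : canon (Z l (W * 2 ^ 0)) = h.choose := by
          rw [pow_zero, Nat.mul_one, hT0canon]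
        rw [hf0]
        have hfm : ((Multiset.range a).map
            ((fun j => canon (Z l (W * 2 ^ j))) ∘ Nat.succ))
            = (Multiset.range a).map (fun j => canon (Z l ((W + W) * 2 ^ j))) := by
          refine Multiset.map_congr rfl fun j _ => ?_
          simp only [Function.comp_apply]
          rw [show W * 2 ^ (j + 1) = (W + W) * 2 ^ j from harith j]
        rw [hfm]
        have := h2
        rw [show (absorbN l n (K.erase h.choose) (W + W)).1 +
            (h.choose ::ₘ (Multiset.range a).map (fun j => canon (Z l ((W + W) * 2 ^ j))))
            = h.choose ::ₘ ((absorbN l n (K.erase h.choose) (W + W)).1 +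
              (Multiset.range a).map (fun j => canon (Z l ((W + W) * 2 ^ j)))) from by
          rw [Multiset.add_cons]]
        rw [this, Multiset.cons_erase hT0K]
      · rw [h1, ← harith] at h3
        rw [h1, ← harith]
        exact h3
      · intro T hT
        exact Multiset.mem_of_le (Multiset.erase_le _ _) (h4 T hT)
    · have hstep : absorbN l (n + 1) K W = (K, W) := by
        rw [absorbN, dif_neg h]
      rw [hstep]
      exact ⟨0, by simp, by simp, h, fun T hT => hT⟩

end Absorb

section PSF

def psFinset : List ℕ → ℕ → Finset ℕ
  | [], _ => ∅
  | m :: ms, o => insert (o + m) (psFinset ms (o + m + 1))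

lemma psFinset_lb : ∀ (ms : List ℕ) (o : ℕ), ∀ x ∈ psFinset ms o, o ≤ x := by
  intro ms
  induction ms with
  | nil => intro o x hx; simp [psFinset] at hx
  | cons m ms ih =>
    intro o x hx
    rcases Finset.mem_insert.mp hx with rfl | hx
    · omega
    · have := ih _ x hx; omega

lemma psFinset_ub : ∀ (ms : List ℕ) (o : ℕ), ∀ x ∈ psFinset ms o,
    x < o + ms.sum + ms.length := by
  intro ms
  induction ms with
  | nil => intro o x hx; simp [psFinset] at hx
  | cons m ms ih =>
    intro o x hx
    simp only [List.sum_cons, List.length_cons]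
    rcases Finset.mem_insert.mp hx with rfl | hx
    · omega
    · have := ih _ x hx; omega

lemma psFinset_inj : ∀ (ms ms' : List ℕ) (o : ℕ), psFinset ms o = psFinset ms' o → ms = ms' := by
  intro ms
  induction ms with
  | nil =>
    intro ms' o h
    cases ms' with
    | nil => rfl
    | cons m' ms' =>
      exfalso
      have : o + m' ∈ (psFinset [] o : Finset ℕ) := by
        rw [h]
        exact Finset.mem_insert_self _ _
      simp [psFinset] at this
  | cons m ms ih =>
    intro ms' o h
    cases ms' with
    | nil =>
      exfalso
      have : o + m ∈ (psFinset [] o : Finset ℕ) := by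
        rw [← h]
        exact Finset.mem_insert_self _ _
      simp [psFinset] at this
    | cons m' ms' =>
      simp only [psFinset] at h
      have hm : m = m' := by
        have h1 : o + m ∈ insert (o + m') (psFinset ms' (o + m' + 1)) := by
          rw [← h]; exact Finset.mem_insert_self _ _
        have h2 : o + m' ∈ insert (o + m) (psFinset ms (o + m + 1)) := by
          rw [h]; exact Finset.mem_insert_self _ _
        rcases Finset.mem_insert.mp h1 with he | h1'
        · omega
        · have hb1 := psFinset_lb _ _ _ h1'
          rcases Finset.mem_insert.mp h2 with he | h2'
          · omega
          · have hb2 := psFinset_lb _ _ _ h2'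
            omega
      subst hm
      have htail : psFinset ms (o + m + 1) = psFinset ms' (o + m + 1) := by
        ext x
        constructor <;> intro hx
        · have hlb := psFinset_lb _ _ x hx
          have : x ∈ insert (o + m) (psFinset ms' (o + m + 1)) := by
            rw [← h]; exact Finset.mem_insert_of_mem hx
          rcases Finset.mem_insert.mp this with rfl | h'
          · omega
          · exact h'
        · have hlb := psFinset_lb _ _ x hx
          have : x ∈ insert (o + m) (psFinset ms (o + m + 1)) := by
            rw [h]; exact Finset.mem_insert_of_mem hx
          rcases Finset.mem_insert.mp this with rfl | h'
          · omega
          · exact h'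
      rw [ih ms' _ htail]

end PSF

section Helpers
open Multiset

lemma sum_sub_one {s : Multiset MS} {f : MS → ℕ} (h : ∀ x ∈ s, 1 ≤ f x) :
    (s.map (fun x => f x - 1)).sum + Multiset.card s = (s.map f).sum := by
  induction s using Multiset.induction with
  | empty => simp
  | cons a s ih =>
    simp only [Multiset.map_cons, Multiset.sum_cons, Multiset.card_cons]
    have h1 := h a (Multiset.mem_cons_self _ _)
    have h2 := ih (fun x hx => h x (Multiset.mem_cons_of_mem hx))
    omega

lemma card_le_sum {s : Multiset MS} {f : MS → ℕ} (h : ∀ x ∈ s, 1 ≤ f x) :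
    Multiset.card s ≤ (s.map f).sum := by
  induction s using Multiset.induction with
  | empty => simp
  | cons a s ih =>
    simp only [Multiset.map_cons, Multiset.sum_cons, Multiset.card_cons]
    have h1 := h a (Multiset.mem_cons_self _ _)
    have h2 := ih (fun x hx => h x (Multiset.mem_cons_of_mem hx))
    omega

lemma countP_msum (pr : Finset ℕ → Prop) [DecidablePred pr] (P : Multiset MS) :
    Multiset.countP pr P.sum = (P.map (Multiset.countP pr)).sum := by
  induction P using Multiset.induction with
  | empty => simp
  | cons D P ih => simp [Multiset.sum_cons, Multiset.countP_add, ih]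

lemma geom_sum_msl (c : ℕ) : ∀ a : ℕ,
    ((Multiset.range a).map (fun j => c * 2 ^ j)).sum = c * (2 ^ a - 1) := by
  intro a
  induction a with
  | zero => simp
  | succ a ih =>
    rw [Multiset.range_succ, Multiset.map_cons, Multiset.sum_cons, ih]
    have h1 : 1 ≤ 2 ^ a := Nat.one_le_two_pow
    have h2 : 2 ^ (a + 1) = 2 ^ a + 2 ^ a := by ring
    rw [h2]
    have e3 : 2 ^ a + 2 ^ a - 1 = (2 ^ a - 1) + 2 ^ a := by omega
    rw [e3, Nat.mul_add]
    omega

lemma list_map_eq_of_forall₂ {α β : Type*} {R : α → β → Prop} {f : α → ℕ} {g : β → ℕ} :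
    ∀ {l1 : List α} {l2 : List β}, List.Forall₂ R l1 l2 → (∀ a b, R a b → g b = f a) →
    l2.map g = l1.map f := by
  intro l1 l2 h hfg
  induction h with
  | nil => rfl
  | cons hab _ ih => simp [ih, hfg _ _ hab]

lemma forall₂_mem_right {α β : Type*} {R : α → β → Prop} :
    ∀ {l1 : List α} {l2 : List β}, List.Forall₂ R l1 l2 → ∀ b ∈ l2, ∃ a ∈ l1, R a b := by
  intro l1 l2 h
  induction h with
  | nil => intro b hb; simp at hb
  | cons hab htl ih =>
    intro b hb
    rcases List.mem_cons.mp hb with rfl | hb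
    · exact ⟨_, List.mem_cons_self, hab⟩
    · obtain ⟨a, ha, hR⟩ := ih b hb
      exact ⟨a, List.mem_cons_of_mem _ ha, hR⟩

lemma list_map_vals_eq {α : Type*} {f g : α → ℕ} :
    ∀ {L : List α}, L.map f = L.map g → ∀ a ∈ L, f a = g a := by
  intro L
  induction L with
  | nil => intro _ a ha; simp at ha
  | cons x L ih =>
    intro h a ha
    simp only [List.map_cons, List.cons.injEq] at h
    rcases List.mem_cons.mp ha with rfl | ha
    · exact h.1
    · exact ih h.2 a ha

end Helpers

section Constr
open Multiset
open scoped Classical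

noncomputable def TmsOf (C : MS) : Multiset MS := (CompsMS C).map canon
noncomputable def TsetOf (C : MS) : Multiset MS := (TmsOf C).dedup
noncomputable def W0Of (C : MS) : ℕ := ((TmsOf C - TsetOf C).map Multiset.card).sum
noncomputable def absOf (l : ℕ) (C : MS) : Multiset MS × ℕ :=
  absorbN l (Multiset.card (TsetOf C)) (TsetOf C) (W0Of C)
noncomputable def finalOf (l : ℕ) (C : MS) : Multiset MS :=
  if W0Of C = 0 then TsetOf C else canon (Z l (absOf l C).2) ::ₘ (absOf l C).1
noncomputable def SOf (l : ℕ) (C : MS) : MS :=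
  ((placeL (finalOf l C).toList 0 : List MS) : Multiset MS).sum
noncomputable def jOf (l : ℕ) (C : MS) : ℕ :=
  if W0Of C = 0 then 0 else 1 + (finalOf l C).toList.idxOf (canon (Z l (absOf l C).2))
noncomputable def msOf (C : MS) : List ℕ :=
  (TsetOf C).toList.map (fun T => Multiset.count T (TmsOf C) - 1)
noncomputable def psOf (C : MS) : Finset ℕ := psFinset (msOf C) 0

variable {l : ℕ}

lemma good_of_sizes (hl : 3 ≤ l) {C : MS} (hsz : ∀ A ∈ C, A.card = l) : Good C := by
  intro A hA h
  have := hsz A hA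
  rw [h] at this
  simp at this
  omega

lemma Z_sizes {W : ℕ} (hl : 3 ≤ l) (hW : 2 ≤ W) (hpar : l * W % 2 = 0) :
    ∀ A ∈ Z l W, A.card = l := by
  intro A hA
  obtain ⟨i, hi, rfl⟩ := mem_Z.mp hA
  exact card_zset hl hW hpar hi

lemma tms_elem (hl : 3 ≤ l) {C : MS} (hdb : IsDoubleCover C) (hsz : ∀ A ∈ C, A.card = l)
    {T : MS} (hT : T ∈ TmsOf C) :
    canon T = T ∧ IsDoubleCover T ∧ ConnectedColl T ∧ (∀ A ∈ T, A.card = l) ∧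
      2 ≤ Multiset.card T ∧ l * Multiset.card T % 2 = 0 := by
  obtain ⟨D, hD, rfl⟩ := Multiset.mem_map.mp hT
  have hcomp := mem_CompsMS.mp hD
  have hG : Good C := good_of_sizes hl hsz
  have hDdb : IsDoubleCover D := isComponent_dbl hdb hcomp
  have hDsz : ∀ A ∈ D, A.card = l := fun A hA => hsz A (Multiset.mem_of_le hcomp.1 hA)
  have hDconn : ConnectedColl D := hcomp.2.2.1
  have hiso := canon_spec D
  refine ⟨canon_idem D, iso_dbl hiso hDdb, iso_connected hiso hDconn, iso_sizes hiso hDsz,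
    ?_, ?_⟩
  · rw [canon_card]
    exact isComponent_two_le hG hdb hcomp
  · rw [canon_card]
    have := dbl_weight_even hDdb hDsz
    omega

lemma tms_weight (hl : 3 ≤ l) {C : MS} (hsz : ∀ A ∈ C, A.card = l) :
    ((TmsOf C).map Multiset.card).sum = Multiset.card C := by
  have hG := good_of_sizes hl hsz
  unfold TmsOf
  rw [Multiset.map_map]
  have : (CompsMS C).map (Multiset.card ∘ canon) = (CompsMS C).map Multiset.card :=
    Multiset.map_congr rfl fun D _ => canon_card D
  rw [this, ← card_msum, sum_CompsMS hG]

lemma tset_add (C : MS) : TsetOf C + (TmsOf C - TsetOf C) = TmsOf C := by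
  rw [add_comm]
  exact tsub_add_cancel_of_le (Multiset.dedup_le _)

lemma w0_add (hl : 3 ≤ l) {C : MS} (hsz : ∀ A ∈ C, A.card = l) :
    ((TsetOf C).map Multiset.card).sum + W0Of C = Multiset.card C := by
  rw [← tms_weight hl hsz]
  conv_rhs => rw [← tset_add C]
  rw [Multiset.map_add, Multiset.sum_add]
  rfl

lemma w0_pos (hl : 3 ≤ l) {C : MS} (hdb : IsDoubleCover C) (hsz : ∀ A ∈ C, A.card = l)
    (h : W0Of C ≠ 0) : 2 ≤ W0Of C := by
  by_cases hR : TmsOf C - TsetOf C = 0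
  · exfalso
    apply h
    unfold W0Of
    rw [hR]
    simp
  · obtain ⟨T, hT⟩ := Multiset.exists_mem_of_ne_zero hR
    have hTm : T ∈ TmsOf C := Multiset.mem_of_le (tsub_le_self (a := TmsOf C) (b := TsetOf C)) hT
    have h2 := (tms_elem hl hdb hsz hTm).2.2.2.2.1
    have h3 : Multiset.card T ≤ ((TmsOf C - TsetOf C).map Multiset.card).sum :=
      Multiset.single_le_sum (fun x _ => Nat.zero_le x) _ (Multiset.mem_map_of_mem _ hT)
    unfold W0Of
    omega

lemma sum_mul_even {s : Multiset MS} (h : ∀ T ∈ s, l * Multiset.card T % 2 = 0) :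
    l * ((s.map Multiset.card).sum) % 2 = 0 := by
  induction s using Multiset.induction with
  | empty => simp
  | cons T s ih =>
    simp only [Multiset.map_cons, Multiset.sum_cons]
    have h1 := h T (Multiset.mem_cons_self _ _)
    have h2 := ih (fun x hx => h x (Multiset.mem_cons_of_mem hx))
    have e : l * (Multiset.card T + (s.map Multiset.card).sum)
        = l * Multiset.card T + l * (s.map Multiset.card).sum := by ring
    omega

lemma w0_even (hl : 3 ≤ l) {C : MS} (hdb : IsDoubleCover C) (hsz : ∀ A ∈ C, A.card = l) :
    l * W0Of C % 2 = 0 := by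
  unfold W0Of
  refine sum_mul_even fun T hT => ?_
  exact (tms_elem hl hdb hsz (Multiset.mem_of_le (tsub_le_self (a := TmsOf C) (b := TsetOf C)) hT)).2.2.2.2.2

lemma tms_eq_tset (hl : 3 ≤ l) {C : MS} (hdb : IsDoubleCover C) (hsz : ∀ A ∈ C, A.card = l)
    (h : W0Of C = 0) : TmsOf C = TsetOf C := by
  have hR : TmsOf C - TsetOf C = 0 := by
    by_contra hR
    obtain ⟨T, hT⟩ := Multiset.exists_mem_of_ne_zero hR
    have hTm : T ∈ TmsOf C := Multiset.mem_of_le (tsub_le_self (a := TmsOf C) (b := TsetOf C)) hT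
    have h2 := (tms_elem hl hdb hsz hTm).2.2.2.2.1
    have h3 : Multiset.card T ≤ ((TmsOf C - TsetOf C).map Multiset.card).sum :=
      Multiset.single_le_sum (fun x _ => Nat.zero_le x) _ (Multiset.mem_map_of_mem _ hT)
    unfold W0Of at h
    omega
  conv_lhs => rw [← tset_add C]
  rw [hR, add_zero]

lemma abs_spec (hl : 3 ≤ l) {C : MS} (hdb : IsDoubleCover C) (hsz : ∀ A ∈ C, A.card = l) :
    ∃ a : ℕ, (absOf l C).2 = W0Of C * 2 ^ a ∧
      (absOf l C).1 + (Multiset.range a).map (fun j => canon (Z l (W0Of C * 2 ^ j))) = TsetOf C ∧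
      (¬ ∃ T ∈ (absOf l C).1, Isomorphic (Z l ((absOf l C).2)) T) ∧
      (∀ T ∈ (absOf l C).1, T ∈ TsetOf C) :=
  absorbN_spec l _ _ _ (le_refl _)
    (fun T hT => (tms_elem hl hdb hsz (Multiset.mem_dedup.mp hT)).1)
    (Multiset.nodup_dedup _)

lemma final_facts (hl : 3 ≤ l) {C : MS} (hdb : IsDoubleCover C) (hsz : ∀ A ∈ C, A.card = l) :
    (finalOf l C).Nodup ∧
    ((finalOf l C).map Multiset.card).sum = Multiset.card C ∧
    (∀ T ∈ finalOf l C, canon T = T ∧ IsDoubleCover T ∧ ConnectedColl T ∧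
      (∀ A ∈ T, A.card = l) ∧ 2 ≤ Multiset.card T) := by
  by_cases h0 : W0Of C = 0
  · rw [finalOf, if_pos h0]
    have hw := w0_add hl hsz (C := C)
    refine ⟨Multiset.nodup_dedup _, by omega, ?_⟩
    intro T hT
    have := tms_elem hl hdb hsz (Multiset.mem_dedup.mp hT)
    tauto
  · obtain ⟨a, ha1, ha2, ha3, ha4⟩ := abs_spec hl hdb hsz
    have hW2 : 2 ≤ W0Of C := w0_pos hl hdb hsz h0
    have hWeven : l * W0Of C % 2 = 0 := w0_even hl hdb hsz
    have hp1 : 1 ≤ 2 ^ a := Nat.one_le_two_pow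
    have hW'2 : 2 ≤ (absOf l C).2 := by
      rw [ha1]
      have := Nat.mul_le_mul hW2 hp1
      omega
    have hW'even : l * (absOf l C).2 % 2 = 0 := by
      rw [ha1]
      obtain ⟨k, hk⟩ : ∃ k, l * W0Of C = 2 * k := ⟨l * W0Of C / 2, by omega⟩
      have e : l * (W0Of C * 2 ^ a) = 2 * (k * 2 ^ a) := by
        rw [show l * (W0Of C * 2 ^ a) = l * W0Of C * 2 ^ a from by ring, hk]
        ring
      rw [e]
      omega
    have hZiso := canon_spec (Z l (absOf l C).2)
    have hfillcard : Multiset.card (canon (Z l (absOf l C).2)) = (absOf l C).2 := by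
      rw [canon_card, card_Z]
    have hK'le : (absOf l C).1 ≤ TsetOf C :=
      Multiset.le_iff_exists_add.mpr ⟨_, ha2.symm⟩
    refine ⟨?_, ?_, ?_⟩
    · rw [finalOf, if_neg h0, Multiset.nodup_cons]
      constructor
      · intro hmem
        exact ha3 ⟨_, hmem, hZiso⟩
      · exact Multiset.nodup_of_le hK'le (Multiset.nodup_dedup _)
    · rw [finalOf, if_neg h0, Multiset.map_cons, Multiset.sum_cons, hfillcard]
      have hsplit := congrArg (fun s : Multiset MS => (s.map Multiset.card).sum) ha2
      simp only [Multiset.map_add, Multiset.sum_add] at hsplit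
      have habs : ((Multiset.range a).map (fun j => canon (Z l (W0Of C * 2 ^ j)))).map
          Multiset.card = (Multiset.range a).map (fun j => W0Of C * 2 ^ j) := by
        rw [Multiset.map_map]
        refine Multiset.map_congr rfl fun j _ => ?_
        simp only [Function.comp_apply]
        rw [canon_card, card_Z]
      rw [habs] at hsplit
      have hgeo := geom_sum_msl (W0Of C) a
      rw [hgeo] at hsplit
      have hw0 := w0_add hl hsz (C := C)
      have e : W0Of C * (2 ^ a - 1) + W0Of C = W0Of C * 2 ^ a := by
        rw [← Nat.mul_succ]
        congr 1
        omega
      rw [ha1]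
      omega
    · intro T hT
      rw [finalOf, if_neg h0] at hT
      rcases Multiset.mem_cons.mp hT with rfl | hT
      · refine ⟨canon_idem _, iso_dbl hZiso (Z_dbl hl hW'2),
          iso_connected hZiso (Z_connected hl hW'2),
          iso_sizes hZiso (Z_sizes hl hW'2 hW'even), ?_⟩
        rw [hfillcard]
        exact hW'2
      · have := tms_elem hl hdb hsz (Multiset.mem_dedup.mp (ha4 T hT))
        tauto

end Constr

section Sfacts
open Multiset
open scoped Classical

variable {l : ℕ}

lemma S_facts (hl : 3 ≤ l) {C : MS} (hdb : IsDoubleCover C) (hsz : ∀ A ∈ C, A.card = l) :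
    (CompsMS (SOf l C)).map canon = finalOf l C ∧
    Multiset.card (SOf l C) = Multiset.card C ∧
    IsDoubleCover (SOf l C) ∧
    IsStandard (SOf l C) ∧
    (∀ A ∈ SOf l C, A.card = l) := by
  obtain ⟨hnd, hwt, helems⟩ := final_facts hl hdb hsz
  set ts := (finalOf l C).toList with hts
  have hcoe : (↑ts : Multiset MS) = finalOf l C := Multiset.coe_toList _
  have htsnd : ts.Nodup := by
    rw [← Multiset.coe_nodup, hcoe]
    exact hnd
  have htsmem : ∀ T ∈ ts, T ∈ finalOf l C := fun T hT => by
    rw [← hcoe]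
    exact Multiset.mem_coe.mpr hT
  set pls := placeL ts 0 with hpls
  have hf2 : List.Forall₂ Isomorphic ts pls := placeL_forall₂ ts 0
  have hpmem : ∀ X ∈ pls, ∃ T ∈ ts, Isomorphic T X := forall₂_mem_right hf2
  have hXfacts : ∀ X ∈ pls, IsDoubleCover X ∧ ConnectedColl X ∧ (∀ A ∈ X, A.card = l)
      ∧ X ≠ 0 ∧ Good X := by
    intro X hX
    obtain ⟨T, hT, hiso⟩ := hpmem X hX
    obtain ⟨hc, hdbT, hconnT, hszT, hcardT⟩ := helems T (htsmem T hT)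
    refine ⟨iso_dbl hiso hdbT, iso_connected hiso hconnT, iso_sizes hiso hszT, ?_,
      good_of_sizes hl (iso_sizes hiso hszT)⟩
    have hcX := iso_card hiso
    intro h
    rw [h] at hcX
    simp at hcX
    omega
  have hpair : List.Pairwise (fun X Y => unionC X ∩ unionC Y = ∅) pls := placeL_pairwise ts 0
  have hune : ∀ X ∈ pls, (unionC X).Nonempty := by
    intro X hX
    obtain ⟨hdbX, _, _, hne0, hGX⟩ := hXfacts X hX
    obtain ⟨A, hA⟩ := Multiset.exists_mem_of_ne_zero hne0
    obtain ⟨x, hx⟩ := Finset.nonempty_iff_ne_empty.mpr (hGX A hA)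
    exact ⟨x, mem_unionC.mpr ⟨A, hA, hx⟩⟩
  have hplsnd : pls.Nodup := by
    refine List.Pairwise.imp_of_mem ?_ hpair
    intro X Y hX _ hemp heq
    obtain ⟨x, hx⟩ := hune X hX
    rw [heq] at hemp
    rw [Finset.inter_self] at hemp
    rw [heq, hemp] at hx
    exact absurd hx (Finset.notMem_empty x)
  have hndm : (↑pls : Multiset MS).Nodup := Multiset.coe_nodup.mpr hplsnd
  have hsymm : Symmetric (fun X Y : MS => unionC X ∩ unionC Y = ∅) := by
    intro X Y h
    rwa [Finset.inter_comm]
  have hdisj : ∀ X ∈ (↑pls : Multiset MS), ∀ Y ∈ (↑pls : Multiset MS), X ≠ Y →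
      unionC X ∩ unionC Y = ∅ := by
    intro X hX Y hY hne
    haveI : Std.Symm (fun X Y : MS => unionC X ∩ unionC Y = ∅) := ⟨fun a b h => hsymm h⟩
    exact hpair.forall (Multiset.mem_coe.mp hX) (Multiset.mem_coe.mp hY) hne
  have hcomps : CompsMS (SOf l C) = ↑pls := by
    have hgoal : SOf l C = ((↑pls : Multiset MS)).sum := rfl
    rw [hgoal]
    exact comps_of_sum hndm
      (fun D hD => (hXfacts D (Multiset.mem_coe.mp hD)).2.1)
      (fun D hD => (hXfacts D (Multiset.mem_coe.mp hD)).2.2.2.1)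
      (fun D hD => (hXfacts D (Multiset.mem_coe.mp hD)).2.2.2.2)
      hdisj
  have hmapcanon : List.map canon pls = ts := by
    rw [placeL_map_canon]
    refine (List.map_congr_left ?_).trans (List.map_id ts)
    intro T hT
    exact (helems T (htsmem T hT)).1
  have hScanon : (CompsMS (SOf l C)).map canon = finalOf l C := by
    rw [hcomps, Multiset.map_coe, hmapcanon, hcoe]
  refine ⟨hScanon, ?_, ?_, ?_, ?_⟩
  · -- card
    have hgoal : SOf l C = ((↑pls : Multiset MS)).sum := rfl
    rw [hgoal, card_msum, Multiset.map_coe, Multiset.sum_coe]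
    rw [list_map_eq_of_forall₂ hf2 (fun a b h => iso_card h)]
    rw [← Multiset.sum_coe, ← Multiset.map_coe, hcoe]
    exact hwt
  · -- double cover
    intro a ha
    have hgoal : SOf l C = ((↑pls : Multiset MS)).sum := rfl
    rw [hgoal] at ha ⊢
    obtain ⟨A, hA, haA⟩ := mem_unionC.mp ha
    obtain ⟨X0, hX0, hAX0⟩ := mem_msum.mp hA
    have haX0 : a ∈ unionC X0 := mem_unionC.mpr ⟨A, hAX0, haA⟩
    rw [countP_msum]
    rw [← Multiset.cons_erase hX0, Multiset.map_cons, Multiset.sum_cons]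
    have h2 : Multiset.countP (fun B => a ∈ B) X0 = 2 :=
      (hXfacts X0 (Multiset.mem_coe.mp hX0)).1 a haX0
    have hrest : (((↑pls : Multiset MS).erase X0).map (Multiset.countP (fun B => a ∈ B))).sum
        = 0 := by
      refine Multiset.sum_eq_zero ?_
      intro b hb
      obtain ⟨Y, hY, rfl⟩ := Multiset.mem_map.mp hb
      have hYm : Y ∈ (↑pls : Multiset MS) := Multiset.mem_of_le (Multiset.erase_le _ _) hY
      have hYne : Y ≠ X0 := by
        intro heq
        rw [heq] at hY
        exact hndm.notMem_erase hY
      rw [Multiset.countP_eq_zero]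
      intro B hB haB
      have : a ∈ unionC Y ∩ unionC X0 := Finset.mem_inter.mpr
        ⟨mem_unionC.mpr ⟨B, hB, haB⟩, haX0⟩
      rw [hdisj Y hYm X0 hX0 hYne] at this
      exact absurd this (Finset.notMem_empty a)
    omega
  · -- standard
    intro D E hD hE hne hiso
    have hDm : D ∈ (↑pls : Multiset MS) := by rw [← hcomps]; exact mem_CompsMS.mpr hD
    have hEm : E ∈ (↑pls : Multiset MS) := by rw [← hcomps]; exact mem_CompsMS.mpr hE
    have hcanon : canon D = canon E := canon_eq_of_iso hiso
    have hndmap : (List.map canon pls).Nodup := by rw [hmapcanon]; exact htsnd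
    exact hne (List.inj_on_of_nodup_map hndmap (Multiset.mem_coe.mp hDm)
      (Multiset.mem_coe.mp hEm) hcanon)
  · -- sizes
    intro A hA
    have hgoal : SOf l C = ((↑pls : Multiset MS)).sum := rfl
    rw [hgoal] at hA
    obtain ⟨X, hX, hAX⟩ := mem_msum.mp hA
    exact (hXfacts X (Multiset.mem_coe.mp hX)).2.2.1 A hAX

end Sfacts

section Recon
open Multiset
open scoped Classical

variable {l : ℕ}

lemma ms_bound (hl : 3 ≤ l) {C : MS} (hdb : IsDoubleCover C) (hsz : ∀ A ∈ C, A.card = l) :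
    (msOf C).sum + (msOf C).length = Multiset.card (TmsOf C) ∧
    Multiset.card (TmsOf C) ≤ Multiset.card C := by
  have hcnt : ∀ T ∈ TsetOf C, 1 ≤ Multiset.count T (TmsOf C) := by
    intro T hT
    exact Multiset.count_pos.mpr (Multiset.mem_dedup.mp hT)
  constructor
  · have hlen : (msOf C).length = Multiset.card (TsetOf C) := by
      rw [msOf, List.length_map, Multiset.length_toList]
    have hsum : (msOf C).sum
        = ((TsetOf C).map (fun T => Multiset.count T (TmsOf C) - 1)).sum := by
      rw [msOf, ← Multiset.sum_coe, ← Multiset.map_coe, Multiset.coe_toList]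
    rw [hlen, hsum, sum_sub_one hcnt]
    have h2 : ((TsetOf C).map (fun T => Multiset.count T (TmsOf C))).sum
        = Multiset.card (TmsOf C) := by
      have h3 := Multiset.toFinset_sum_count_eq (TmsOf C)
      rw [Finset.sum_eq_multiset_sum] at h3
      rw [show (TsetOf C) = (TmsOf C).toFinset.val from (Multiset.toFinset_val _).symm]
      exact h3
    exact h2
  · have h1 : ∀ T ∈ TmsOf C, 1 ≤ Multiset.card T := by
      intro T hT
      have := (tms_elem hl hdb hsz hT).2.2.2.2.1
      omega
    have := card_le_sum h1
    rw [tms_weight hl hsz] at this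
    exact this

lemma ps_bound (hl : 3 ≤ l) {C : MS} (hdb : IsDoubleCover C) (hsz : ∀ A ∈ C, A.card = l) :
    ∀ m ∈ psOf C, m < Multiset.card C := by
  intro m hm
  obtain ⟨h1, h2⟩ := ms_bound hl hdb hsz
  have := psFinset_ub (msOf C) 0 m hm
  omega

lemma j_bound (hl : 3 ≤ l) {C : MS} (hdb : IsDoubleCover C) (hsz : ∀ A ∈ C, A.card = l) :
    jOf l C ≤ Multiset.card C := by
  by_cases h0 : W0Of C = 0
  · rw [jOf, if_pos h0]
    omega
  · rw [jOf, if_neg h0]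
    have hmem : canon (Z l (absOf l C).2) ∈ (finalOf l C).toList := by
      rw [Multiset.mem_toList, finalOf, if_neg h0]
      exact Multiset.mem_cons_self _ _
    have hidx := List.idxOf_lt_length_iff.mpr hmem
    rw [Multiset.length_toList] at hidx
    have hcard : Multiset.card (finalOf l C) ≤ Multiset.card C := by
      obtain ⟨_, hwt, helems⟩ := final_facts hl hdb hsz
      have h1 : ∀ T ∈ finalOf l C, 1 ≤ Multiset.card T := by
        intro T hT
        have := (helems T hT).2.2.2.2
        omega
      have := card_le_sum h1
      omega
    omega

lemma recon (hl : 3 ≤ l) {C C' : MS} (hdb : IsDoubleCover C) (hsz : ∀ A ∈ C, A.card = l)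
    (hdb' : IsDoubleCover C') (hsz' : ∀ A ∈ C', A.card = l)
    (hfe : finalOf l C = finalOf l C') (hje : jOf l C = jOf l C') (hpe : psOf C = psOf C') :
    TmsOf C = TmsOf C' := by
  have hms : msOf C = msOf C' := psFinset_inj _ _ 0 hpe
  have htset : TsetOf C = TsetOf C' := by
    by_cases h0 : W0Of C = 0
    · have h0' : W0Of C' = 0 := by
        by_contra h'
        rw [jOf, if_pos h0, jOf, if_neg h'] at hje
        omega
      have h1 : finalOf l C = TsetOf C := by rw [finalOf, if_pos h0]
      have h2 : finalOf l C' = TsetOf C' := by rw [finalOf, if_pos h0']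
      rw [← h1, ← h2]
      exact hfe
    · have h0' : W0Of C' ≠ 0 := by
        intro h'
        rw [jOf, if_neg h0, jOf, if_pos h'] at hje
        omega
      obtain ⟨a, ha1, ha2, ha3, ha4⟩ := abs_spec hl hdb hsz
      obtain ⟨a', hb1, hb2, hb3, hb4⟩ := abs_spec hl hdb' hsz'
      have hf1 : finalOf l C = canon (Z l (absOf l C).2) ::ₘ (absOf l C).1 := by
        rw [finalOf, if_neg h0]
      have hf2 : finalOf l C' = canon (Z l (absOf l C').2) ::ₘ (absOf l C').1 := by
        rw [finalOf, if_neg h0']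
      rw [jOf, if_neg h0, jOf, if_neg h0'] at hje
      have htl : (finalOf l C).toList = (finalOf l C').toList := by rw [hfe]
      have hFmem : canon (Z l (absOf l C).2) ∈ (finalOf l C).toList := by
        rw [Multiset.mem_toList, hf1]
        exact Multiset.mem_cons_self _ _
      have hF'mem : canon (Z l (absOf l C').2) ∈ (finalOf l C).toList := by
        rw [htl, Multiset.mem_toList, hf2]
        exact Multiset.mem_cons_self _ _
      have hje2 : (finalOf l C).toList.idxOf (canon (Z l (absOf l C).2))
          = (finalOf l C).toList.idxOf (canon (Z l (absOf l C').2)) := by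
        rw [← htl] at hje
        omega
      have hFeq : canon (Z l (absOf l C).2) = canon (Z l (absOf l C').2) :=
        (List.idxOf_inj hFmem).mp hje2
      have hW'eq : (absOf l C).2 = (absOf l C').2 := by
        have e1 : Multiset.card (canon (Z l (absOf l C).2)) = (absOf l C).2 := by
          rw [canon_card, card_Z]
        have e2 : Multiset.card (canon (Z l (absOf l C').2)) = (absOf l C').2 := by
          rw [canon_card, card_Z]
        rw [← e1, hFeq]
        exact e2
      have hKeq : (absOf l C).1 = (absOf l C').1 := by
        have := hfe
        rw [hf1, hf2, ← hFeq] at this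
        exact (Multiset.cons_inj_right _).mp this
      -- lengths of ms lists give card Tset equality
      have hlen : Multiset.card (TsetOf C) = Multiset.card (TsetOf C') := by
        have e1 : (msOf C).length = Multiset.card (TsetOf C) := by
          rw [msOf, List.length_map, Multiset.length_toList]
        have e2 : (msOf C').length = Multiset.card (TsetOf C') := by
          rw [msOf, List.length_map, Multiset.length_toList]
        rw [← e1, ← e2, hms]
      have hcards : Multiset.card ((absOf l C).1) + a = Multiset.card (TsetOf C) := by
        have := congrArg Multiset.card ha2
        simpa using this
      have hcards' : Multiset.card ((absOf l C').1) + a' = Multiset.card (TsetOf C') := by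
        have := congrArg Multiset.card hb2
        simpa using this
      have haeq : a = a' := by
        rw [hKeq] at hcards
        omega
      have hW0eq : W0Of C = W0Of C' := by
        have h2a : (0:ℕ) < 2 ^ a := Nat.pow_pos (by omega)
        refine Nat.eq_of_mul_eq_mul_right h2a ?_
        rw [← ha1, hW'eq, hb1, haeq]
      rw [← ha2, ← hb2, hKeq, haeq, hW0eq]
  -- counts
  have hLeq : (TsetOf C).toList = (TsetOf C').toList := by rw [htset]
  have hmapeq : (TsetOf C).toList.map (fun T => Multiset.count T (TmsOf C) - 1)
      = (TsetOf C).toList.map (fun T => Multiset.count T (TmsOf C') - 1) := by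
    have e1 : msOf C = (TsetOf C).toList.map (fun T => Multiset.count T (TmsOf C) - 1) := rfl
    have e2 : msOf C' = (TsetOf C').toList.map (fun T => Multiset.count T (TmsOf C') - 1) := rfl
    rw [e1, e2, ← hLeq] at hms
    exact hms
  have hvals := list_map_vals_eq hmapeq
  ext T
  by_cases hT : T ∈ TsetOf C
  · have hTl : T ∈ (TsetOf C).toList := Multiset.mem_toList.mpr hT
    have h1 := hvals T hTl
    have hc1 : 1 ≤ Multiset.count T (TmsOf C) := Multiset.count_pos.mpr (Multiset.mem_dedup.mp hT)
    have hc2 : 1 ≤ Multiset.count T (TmsOf C') := by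
      refine Multiset.count_pos.mpr (Multiset.mem_dedup.mp ?_)
      rw [show (TmsOf C').dedup = TsetOf C' from rfl, ← htset]
      exact hT
    omega
  · have h1 : T ∉ TmsOf C := fun h => hT (Multiset.mem_dedup.mpr h)
    have h2 : T ∉ TmsOf C' := by
      intro h
      apply hT
      rw [htset]
      exact Multiset.mem_dedup.mpr h
    rw [Multiset.count_eq_zero_of_notMem h1, Multiset.count_eq_zero_of_notMem h2]

lemma iso_of_tms_eq (hl : 3 ≤ l) {C C' : MS} (hsz : ∀ A ∈ C, A.card = l)
    (hsz' : ∀ A ∈ C', A.card = l) (h : TmsOf C = TmsOf C') : Isomorphic C C' := by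
  have hG := good_of_sizes hl hsz
  have hG' := good_of_sizes hl hsz'
  have hrel0 : Multiset.Rel (fun D E => canon D = canon E) (CompsMS C) (CompsMS C') :=
    rel_of_map_eq_map h
  have hrel : Multiset.Rel Isomorphic (CompsMS C) (CompsMS C') :=
    hrel0.mono (fun _ _ _ _ hc => iso_of_canon_eq hc)
  have := iso_sum_of_rel hrel (nodup_CompsMS C) (nodup_CompsMS C')
    (fun D hD E hE hne => isComponent_disjoint hG (mem_CompsMS.mp hD) (mem_CompsMS.mp hE) hne)
    (fun D hD E hE hne => isComponent_disjoint hG' (mem_CompsMS.mp hD) (mem_CompsMS.mp hE) hne)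
  rwa [sum_CompsMS hG, sum_CompsMS hG'] at this

end Recon


section Final
open Multiset
open scoped Classical

noncomputable def gmap (l p : ℕ) (hl : 3 ≤ l) :
    Quot (fun C D : {C : Multiset (Finset ℕ) //
        Multiset.card C = p ∧ IsDoubleCover C ∧ ∀ A ∈ C, A.card = l} =>
      Isomorphic C.1 D.1) →
    Quot (fun C D : {C : Multiset (Finset ℕ) //
        Multiset.card C = p ∧ IsDoubleCover C ∧ IsStandard C ∧ ∀ A ∈ C, A.card = l} =>
      Isomorphic C.1 D.1) × Fin (p + 1) × Finset (Fin p) := fun q =>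
  (Quot.mk _ ⟨SOf l q.out.1, by
      obtain ⟨h1, h2, h3⟩ := q.out.2
      obtain ⟨hc1, hc2, hc3, hc4, hc5⟩ := S_facts hl h2 h3
      exact ⟨by rw [hc2, h1], hc3, hc4, hc5⟩⟩,
   ⟨min (jOf l q.out.1) p, by omega⟩,
   (psOf q.out.1).attachFin (by
      intro m hm
      obtain ⟨h1, h2, h3⟩ := q.out.2
      have := ps_bound hl h2 h3 m hm
      omega))

lemma gmap_inj (l p : ℕ) (hl : 3 ≤ l) : Function.Injective (gmap l p hl) := by
  intro q q' h
  obtain ⟨hc1, hdb, hsz⟩ := q.out.2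
  obtain ⟨hc1', hdb', hsz'⟩ := q'.out.2
  have h1 := congrArg Prod.fst h
  have h2 := congrArg (fun t => (t.2.1 : Fin (p + 1)).val) h
  have h3 := congrArg (fun t => t.2.2) h
  simp only [gmap] at h1 h2 h3
  have hS : Isomorphic (SOf l q.out.1) (SOf l q'.out.1) :=
    eqvGen_iso (f := fun c : {C : Multiset (Finset ℕ) //
        Multiset.card C = p ∧ IsDoubleCover C ∧ IsStandard C ∧ ∀ A ∈ C, A.card = l} => c.1)
      (Quot.eq.mp h1)
  have hfe : finalOf l q.out.1 = finalOf l q'.out.1 := by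
    have e1 := (S_facts hl hdb hsz).1
    have e2 := (S_facts hl hdb' hsz').1
    have e3 := compsMS_map_canon hS
    rw [e1, e2] at e3
    exact e3.symm
  have hje : jOf l q.out.1 = jOf l q'.out.1 := by
    have hjx := j_bound hl hdb hsz
    have hjy := j_bound hl hdb' hsz'
    rw [hc1] at hjx
    rw [hc1'] at hjy
    omega
  have hpe : psOf q.out.1 = psOf q'.out.1 := by
    ext m
    by_cases hm : m < p
    · have hmem := congrArg (fun s => (⟨m, hm⟩ : Fin p) ∈ s) h3
      simp only [Finset.mem_attachFin, eq_iff_iff] at hmem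
      exact hmem
    · constructor <;> intro hmemm
      · have := ps_bound hl hdb hsz m hmemm
        rw [hc1] at this
        omega
      · have := ps_bound hl hdb' hsz' m hmemm
        rw [hc1'] at this
        omega
  have htms := recon hl hdb hsz hdb' hsz' hfe hje hpe
  have hiso := iso_of_tms_eq hl hsz hsz' htms
  rw [← Quot.out_eq q, ← Quot.out_eq q']
  exact Quot.sound hiso

/-- for `l ≥ 3`, `p ≥ 2` with `pl` even,
`μ_{l,p}(full) ≤ p² · 2^p · μ_{l,p}(standard)`. -/
theorem stmt12 (l p : ℕ) (hl : 3 ≤ l) (hp : 2 ≤ p) (hev : Even (p * l)) :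
    muFull l p ≤ p ^ 2 * 2 ^ p * muStandard l p := by
  classical
  rcases finite_or_infinite (Quot (fun C D : {C : Multiset (Finset ℕ) //
      Multiset.card C = p ∧ IsDoubleCover C ∧ IsStandard C ∧ ∀ A ∈ C, A.card = l} =>
    Isomorphic C.1 D.1)) with hfin | hinf
  · haveI := hfin
    have hinj := gmap_inj l p hl
    have hcard := Nat.card_le_card_of_injective _ hinj
    rw [Nat.card_prod, Nat.card_prod] at hcard
    have e1 : Nat.card (Fin (p + 1)) = p + 1 := by
      rw [Nat.card_eq_fintype_card, Fintype.card_fin]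
    have e2 : Nat.card (Finset (Fin p)) = 2 ^ p := by
      rw [Nat.card_eq_fintype_card, Fintype.card_finset, Fintype.card_fin]
    rw [e1, e2] at hcard
    refine le_trans hcard ?_
    have h1 : (p + 1) * 2 ^ p ≤ p ^ 2 * 2 ^ p := by
      refine Nat.mul_le_mul_right _ ?_
      nlinarith
    calc Nat.card _ * ((p + 1) * 2 ^ p)
        ≤ Nat.card (Quot (fun C D : {C : Multiset (Finset ℕ) //
            Multiset.card C = p ∧ IsDoubleCover C ∧ IsStandard C ∧ ∀ A ∈ C, A.card = l} =>
          Isomorphic C.1 D.1)) * (p ^ 2 * 2 ^ p) := Nat.mul_le_mul_left _ h1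
      _ = p ^ 2 * 2 ^ p * muStandard l p := Nat.mul_comm _ _
  · have ιinj : ∃ ι : Quot (fun C D : {C : Multiset (Finset ℕ) //
        Multiset.card C = p ∧ IsDoubleCover C ∧ IsStandard C ∧ ∀ A ∈ C, A.card = l} =>
      Isomorphic C.1 D.1) → Quot (fun C D : {C : Multiset (Finset ℕ) //
        Multiset.card C = p ∧ IsDoubleCover C ∧ ∀ A ∈ C, A.card = l} =>
      Isomorphic C.1 D.1), Function.Injective ι := by
      refine ⟨Quot.lift (fun c => Quot.mk _ ⟨c.1, c.2.1, c.2.2.1, c.2.2.2.2⟩)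
        (fun a b hab => Quot.sound hab), ?_⟩
      intro q q' hqq
      obtain ⟨a, rfl⟩ := Quot.exists_rep q
      obtain ⟨b, rfl⟩ := Quot.exists_rep q'
      have h3 : Isomorphic a.1 b.1 :=
        eqvGen_iso (f := fun c : {C : Multiset (Finset ℕ) //
            Multiset.card C = p ∧ IsDoubleCover C ∧ ∀ A ∈ C, A.card = l} => c.1)
          (Quot.eq.mp hqq)
      exact Quot.sound h3
    obtain ⟨ι, hι⟩ := ιinj
    haveI : Infinite (Quot (fun C D : {C : Multiset (Finset ℕ) //
        Multiset.card C = p ∧ IsDoubleCover C ∧ ∀ A ∈ C, A.card = l} =>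
      Isomorphic C.1 D.1)) := Infinite.of_injective ι hι
    rw [muFull, Nat.card_eq_zero_of_infinite]
    exact Nat.zero_le _

end Final
end

section
/- Let G be a finite set and let I_1,…,I_p be nonempty subsets of G with G = ∪_{k=1}^p I_k, such that every element of G belongs to an even number of the sets I_k. Let N ≥ 1 be an integer and for each k = 1,…,p let a_k be a nonnegative real-valued function on the set of maps from I_k to {1,…,N}. Then Σ_{x : G → {1,…,N}} ∏_{k=1}^p a_k(x restricted to I_k) ≤ ∏_{k=1}^p ( Σ_{y : I_k → {1,…,N}} a_k(y)² )^{1/2}. -/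
open Finset

section Stmt13Aux
variable {G : Type*} [Fintype G] [DecidableEq G]

private lemma sum_update (N : ℕ) (g : G) (F : (G → Fin N) → ℝ) :
    ∑ x : G → Fin N, ∑ t : Fin N, F (Function.update x g t) = N * ∑ x : G → Fin N, F x := by
  set e := Equiv.funSplitAt g (Fin N) with he
  have key : ∀ (t s : Fin N) (z : {j // j ≠ g} → Fin N),
      Function.update (e.symm (s, z)) g t = e.symm (t, z) := by
    intro t s z
    funext a
    by_cases h : a = g
    · subst h; simp [he, Equiv.funSplitAt, Equiv.piSplitAt]
    · simp [Function.update_of_ne h, he, Equiv.funSplitAt, Equiv.piSplitAt, h]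
  have h1 : ∀ t : Fin N, ∑ x : G → Fin N, F (Function.update x g t)
      = (N:ℝ) * ∑ z : {j // j ≠ g} → Fin N, F (e.symm (t, z)) := by
    intro t
    rw [← Equiv.sum_comp e.symm (fun x => F (Function.update x g t)), Fintype.sum_prod_type]
    simp only [key, Finset.sum_const, Finset.card_univ, Fintype.card_fin, nsmul_eq_mul]
  have h2 : ∑ x : G → Fin N, F x = ∑ t : Fin N, ∑ z : {j // j ≠ g} → Fin N, F (e.symm (t, z)) := by
    rw [← Equiv.sum_comp e.symm F, Fintype.sum_prod_type]
  rw [Finset.sum_comm]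
  simp only [h1]
  rw [← Finset.mul_sum, h2]

private lemma sum_restrict (N : ℕ) (T : Finset G) (h : ({i // i ∈ T} → Fin N) → ℝ) :
    ∑ x : G → Fin N, h (fun i => x i.1)
      = (N:ℝ) ^ (Fintype.card G - T.card) * ∑ y : {i // i ∈ T} → Fin N, h y := by
  set e := Equiv.piEquivPiSubtypeProd (fun i => i ∈ T) (fun _ => Fin N) with he
  have key : ∀ (y : {i // i ∈ T} → Fin N) (z : {i // ¬ i ∈ T} → Fin N),
      (fun i : {i // i ∈ T} => (e.symm (y, z)) i.1) = y := by
    intro y z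
    funext i
    simp [he, Equiv.piEquivPiSubtypeProd, i.2]
  rw [← Equiv.sum_comp e.symm (fun x => h fun i => x i.1), Fintype.sum_prod_type]
  simp only [key, Finset.sum_const, Finset.card_univ, nsmul_eq_mul]
  rw [← Finset.mul_sum]
  congr 2
  rw [Fintype.card_fun, Fintype.card_fin, Fintype.card_subtype_compl, Fintype.card_coe,
    Nat.cast_pow]

private lemma holder_step {ι : Type*} (N : ℕ) (K : Finset ι) (hd : 2 ≤ K.card)
    (h : ι → Fin N → ℝ) (hh : ∀ k t, 0 ≤ h k t) :
    ∑ t : Fin N, ∏ k ∈ K, h k t ≤ ∏ k ∈ K, Real.sqrt (∑ t : Fin N, h k t ^ 2) := by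
  by_cases hz : ∃ k ∈ K, ∑ t : Fin N, h k t ^ 2 = 0
  · obtain ⟨k₀, hk₀, hs⟩ := hz
    have hzero : ∀ t, h k₀ t = 0 := by
      intro t
      have := (Finset.sum_eq_zero_iff_of_nonneg (fun t _ => sq_nonneg (h k₀ t))).1 hs t
        (mem_univ t)
      exact pow_eq_zero_iff (two_ne_zero) |>.1 this
    calc ∑ t : Fin N, ∏ k ∈ K, h k t = 0 := by
          apply Finset.sum_eq_zero; intro t _
          exact Finset.prod_eq_zero hk₀ (hzero t)
      _ ≤ _ := Finset.prod_nonneg (fun k _ => Real.sqrt_nonneg _)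
  push_neg at hz
  have hpos : ∀ k ∈ K, 0 < ∑ t : Fin N, h k t ^ 2 := fun k hk =>
    ((Finset.sum_nonneg fun t _ => sq_nonneg _).lt_of_ne (Ne.symm (hz k hk)))
  set c : ι → ℝ := fun k => Real.sqrt (∑ t : Fin N, h k t ^ 2) with hc
  have hcpos : ∀ k ∈ K, 0 < c k := fun k hk => Real.sqrt_pos.2 (hpos k hk)
  set u : ι → Fin N → ℝ := fun k t => h k t / c k with hu
  have hun : ∀ k ∈ K, ∀ t, 0 ≤ u k t := fun k hk t => div_nonneg (hh k t) (hcpos k hk).le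
  have husq : ∀ k ∈ K, ∑ t : Fin N, u k t ^ 2 = 1 := by
    intro k hk
    have hc2 : c k ^ 2 = ∑ t : Fin N, h k t ^ 2 := Real.sq_sqrt (hpos k hk).le
    simp only [hu, div_pow, ← Finset.sum_div]
    rw [← hc2, div_self (pow_ne_zero 2 (hcpos k hk).ne')]
  have hule : ∀ k ∈ K, ∀ t, u k t ≤ 1 := by
    intro k hk t
    have h1 : u k t ^ 2 ≤ 1 := by
      rw [← husq k hk]
      exact Finset.single_le_sum (fun s _ => sq_nonneg (u k s)) (mem_univ t)
    exact (pow_le_one_iff_of_nonneg (hun k hk t) two_ne_zero).1 h1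
  set d := K.card with hdd
  have hd0 : (d:ℝ) ≠ 0 := Nat.cast_ne_zero.2 (by omega)
  have key : ∑ t : Fin N, ∏ k ∈ K, u k t ≤ 1 := by
    have amgm : ∀ t, ∏ k ∈ K, u k t ≤ ∑ k ∈ K, (d:ℝ)⁻¹ * (u k t ^ d) := by
      intro t
      have hg := Real.geom_mean_le_arith_mean_weighted K (fun _ => (d:ℝ)⁻¹)
        (fun k => u k t ^ d) (fun k _ => by positivity)
        (by simp [Finset.sum_const, hdd, hd0]; exact mul_inv_cancel₀ hd0) (fun k hk => pow_nonneg (hun k hk t) d)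
      have hrw : ∀ k ∈ K, ((u k t ^ d) ^ ((d:ℝ)⁻¹ : ℝ)) = u k t := by
        intro k hk
        rw [← Real.rpow_natCast (u k t) d, ← Real.rpow_mul (hun k hk t),
          mul_inv_cancel₀ hd0, Real.rpow_one]
      rwa [Finset.prod_congr rfl hrw] at hg
    calc ∑ t : Fin N, ∏ k ∈ K, u k t ≤ ∑ t : Fin N, ∑ k ∈ K, (d:ℝ)⁻¹ * (u k t ^ d) :=
          Finset.sum_le_sum (fun t _ => amgm t)
      _ = (d:ℝ)⁻¹ * ∑ k ∈ K, ∑ t : Fin N, u k t ^ d := by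
          rw [Finset.sum_comm]
          simp only [← Finset.mul_sum]
      _ ≤ (d:ℝ)⁻¹ * ∑ k ∈ K, ∑ t : Fin N, u k t ^ 2 := by
          apply mul_le_mul_of_nonneg_left _ (by positivity)
          apply Finset.sum_le_sum; intro k hk
          apply Finset.sum_le_sum; intro t _
          exact pow_le_pow_of_le_one (hun k hk t) (hule k hk t) hd
      _ = 1 := by
          rw [Finset.sum_congr rfl husq]
          simp [hd0]
          exact inv_mul_cancel₀ hd0
  have hfact : ∀ t, ∏ k ∈ K, h k t = (∏ k ∈ K, c k) * ∏ k ∈ K, u k t := by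
    intro t
    rw [← Finset.prod_mul_distrib]
    apply Finset.prod_congr rfl
    intro k hk
    simp only [hu]
    rw [mul_comm, div_mul_cancel₀ _ (hcpos k hk).ne']
  calc ∑ t : Fin N, ∏ k ∈ K, h k t = (∏ k ∈ K, c k) * ∑ t : Fin N, ∏ k ∈ K, u k t := by
        simp only [hfact]; rw [← Finset.mul_sum]
    _ ≤ (∏ k ∈ K, c k) * 1 :=
        mul_le_mul_of_nonneg_left key (Finset.prod_nonneg fun k hk => (hcpos k hk).le)
    _ = ∏ k ∈ K, c k := mul_one _




private lemma aux13 (N p : ℕ) (hN : 1 ≤ N) :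
    ∀ (n : ℕ) (S : Finset G) (I : Fin p → Finset G) (f : Fin p → (G → Fin N) → ℝ),
      S.card = n →
      (∀ k, I k ⊆ S) →
      (∀ k x y, (∀ i ∈ I k, x i = y i) → f k x = f k y) →
      (∀ k x, 0 ≤ f k x) →
      (∀ g ∈ S, 2 ≤ (univ.filter (fun k => g ∈ I k)).card) →
      ∑ x : G → Fin N, ∏ k, f k x ≤
        (N:ℝ) ^ (Fintype.card G - S.card) *
          ∏ k, Real.sqrt ((∑ x : G → Fin N, f k x ^ 2) / (N:ℝ) ^ (Fintype.card G - (I k).card)) := by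
  have hNR : (0:ℝ) < N := by exact_mod_cast hN
  intro n
  induction n with
  | zero =>
    intro S I f hScard hIsub hdep hf0 _
    have hSempty : S = ∅ := Finset.card_eq_zero.1 hScard
    have hIempty : ∀ k, I k = ∅ := fun k =>
      Finset.subset_empty.1 (hSempty ▸ hIsub k)
    set x₀ : G → Fin N := fun _ => ⟨0, hN⟩ with hx₀
    have hconst : ∀ k x, f k x = f k x₀ := by
      intro k x
      apply hdep
      intro i hi
      rw [hIempty k] at hi
      exact absurd hi (Finset.notMem_empty i)
    have hcard : ∀ (F : ℝ), ∑ _x : G → Fin N, F = (N:ℝ) ^ Fintype.card G * F := by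
      intro F
      rw [Finset.sum_const, Finset.card_univ, Fintype.card_fun, Fintype.card_fin,
        nsmul_eq_mul, Nat.cast_pow]
    have hLHS : ∑ x : G → Fin N, ∏ k, f k x = (N:ℝ) ^ Fintype.card G * ∏ k, f k x₀ := by
      rw [← hcard]
      apply Finset.sum_congr rfl
      intro x _
      exact Finset.prod_congr rfl (fun k _ => hconst k x)
    rw [hLHS, hScard]
    apply le_of_eq
    have hfac : ∀ k : Fin p,
        Real.sqrt ((∑ x : G → Fin N, f k x ^ 2) / (N:ℝ) ^ (Fintype.card G - (I k).card))
          = f k x₀ := by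
      intro k
      have h1 : ∑ x : G → Fin N, f k x ^ 2 = (N:ℝ) ^ Fintype.card G * f k x₀ ^ 2 := by
        rw [← hcard]
        exact Finset.sum_congr rfl (fun x _ => by rw [hconst k x])
      rw [h1, hIempty k, Finset.card_empty, Nat.sub_zero,
        mul_div_cancel_left₀ _ (by positivity), Real.sqrt_sq (hf0 k x₀)]
    rw [Finset.prod_congr rfl (fun k _ => hfac k), Nat.sub_zero]
  | succ n ih =>
    intro S I f hScard hIsub hdep hf0 hdeg
    obtain ⟨g, hg⟩ := Finset.card_pos.1 (by omega : 0 < S.card)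
    set Kg : Finset (Fin p) := univ.filter (fun k => g ∈ I k) with hKg
    have hKg2 : 2 ≤ Kg.card := hdeg g hg
    set S' := S.erase g with hS'
    set I' : Fin p → Finset G := fun k => (I k).erase g with hI'
    set f' : Fin p → (G → Fin N) → ℝ := fun k x =>
      if g ∈ I k then Real.sqrt (∑ t : Fin N, f k (Function.update x g t) ^ 2) else f k x
      with hf'
    have hS'card : S'.card = n := by
      rw [hS', Finset.card_erase_of_mem hg, hScard]; omega
    have hI'sub : ∀ k, I' k ⊆ S' := fun k => Finset.erase_subset_erase g (hIsub k)
    -- update agreement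
    have hupd : ∀ (k : Fin p) (x y : G → Fin N) (t : Fin N),
        (∀ i ∈ I' k, x i = y i) →
        f k (Function.update x g t) = f k (Function.update y g t) := by
      intro k x y t hxy
      apply hdep
      intro i hi
      by_cases hig : i = g
      · subst hig; simp
      · rw [Function.update_of_ne hig, Function.update_of_ne hig]
        exact hxy i (Finset.mem_erase.2 ⟨hig, hi⟩)
    have hdep' : ∀ k x y, (∀ i ∈ I' k, x i = y i) → f' k x = f' k y := by
      intro k x y hxy
      by_cases hgk : g ∈ I k
      · simp only [hf', if_pos hgk]
        congr 1
        exact Finset.sum_congr rfl (fun t _ => by rw [hupd k x y t hxy])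
      · simp only [hf', if_neg hgk]
        apply hdep
        intro i hi
        exact hxy i (Finset.mem_erase.2 ⟨fun hig => hgk (hig ▸ hi), hi⟩)
    have hf'0 : ∀ k x, 0 ≤ f' k x := by
      intro k x
      by_cases hgk : g ∈ I k
      · simp only [hf', if_pos hgk]; exact Real.sqrt_nonneg _
      · simp only [hf', if_neg hgk]; exact hf0 k x
    have hdeg' : ∀ g' ∈ S', 2 ≤ (univ.filter (fun k => g' ∈ I' k)).card := by
      intro g' hg'
      have hne : g' ≠ g := (Finset.mem_erase.1 hg').1
      have : (univ.filter (fun k => g' ∈ I' k)) = (univ.filter (fun k => g' ∈ I k)) := by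
        apply Finset.filter_congr
        intro k _
        simp [hI', Finset.mem_erase, hne]
      rw [this]
      exact hdeg g' (Finset.mem_erase.1 hg').2
    -- step inequality
    have hstep : (N:ℝ) * ∑ x : G → Fin N, ∏ k, f k x ≤ ∑ x : G → Fin N, ∏ k, f' k x := by
      rw [← sum_update N g (fun x => ∏ k, f k x)]
      apply Finset.sum_le_sum
      intro x _
      have hsplit : ∀ t : Fin N, ∏ k, f k (Function.update x g t)
          = (∏ k ∈ Kg, f k (Function.update x g t)) *
            ∏ k ∈ univ.filter (fun k => ¬ g ∈ I k), f k x := by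
        intro t
        rw [← Finset.prod_filter_mul_prod_filter_not univ (fun k => g ∈ I k)]
        congr 1
        apply Finset.prod_congr rfl
        intro k hk
        have hgk : g ∉ I k := (Finset.mem_filter.1 hk).2
        apply hdep
        intro i hi
        have hig : i ≠ g := fun hig => hgk (hig ▸ hi)
        exact Function.update_of_ne hig t x
      calc ∑ t : Fin N, ∏ k, f k (Function.update x g t)
          = (∑ t : Fin N, ∏ k ∈ Kg, f k (Function.update x g t)) *
            ∏ k ∈ univ.filter (fun k => ¬ g ∈ I k), f k x := by
            rw [Finset.sum_mul]
            exact Finset.sum_congr rfl (fun t _ => hsplit t)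
        _ ≤ (∏ k ∈ Kg, f' k x) * ∏ k ∈ univ.filter (fun k => ¬ g ∈ I k), f k x := by
            apply mul_le_mul_of_nonneg_right _
              (Finset.prod_nonneg fun k _ => hf0 k x)
            have hh := holder_step N Kg hKg2 (fun k t => f k (Function.update x g t))
              (fun k t => hf0 k _)
            apply le_trans hh
            apply le_of_eq
            apply Finset.prod_congr rfl
            intro k hk
            have hgk : g ∈ I k := (Finset.mem_filter.1 hk).2
            simp only [hf', if_pos hgk]
        _ = ∏ k, f' k x := by
            rw [← Finset.prod_filter_mul_prod_filter_not univ (fun k => g ∈ I k)]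
            congr 1
            apply Finset.prod_congr rfl
            intro k hk
            have hgk : g ∉ I k := (Finset.mem_filter.1 hk).2
            simp only [hf', if_neg hgk]
    -- compare the RHS factors
    have hfac : ∀ k : Fin p,
        Real.sqrt ((∑ x : G → Fin N, f' k x ^ 2) / (N:ℝ) ^ (Fintype.card G - (I' k).card))
          = Real.sqrt ((∑ x : G → Fin N, f k x ^ 2) / (N:ℝ) ^ (Fintype.card G - (I k).card)) := by
      intro k
      by_cases hgk : g ∈ I k
      · have hsum : ∑ x : G → Fin N, f' k x ^ 2 = N * ∑ x : G → Fin N, f k x ^ 2 := by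
          rw [← sum_update N g (fun x => f k x ^ 2)]
          apply Finset.sum_congr rfl
          intro x _
          simp only [hf', if_pos hgk]
          exact Real.sq_sqrt (Finset.sum_nonneg fun t _ => sq_nonneg _)
        have hIk1 : 1 ≤ (I k).card := Finset.card_pos.2 ⟨g, hgk⟩
        have hIkG : (I k).card ≤ Fintype.card G := Finset.card_le_univ _
        have hcards : Fintype.card G - (I' k).card = (Fintype.card G - (I k).card) + 1 := by
          rw [hI'] 
          rw [Finset.card_erase_of_mem hgk]
          omega
        rw [hsum, hcards, pow_succ]
        congr 1
        field_simp
      · have hI'k : I' k = I k := by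
          rw [hI']
          exact Finset.erase_eq_of_notMem hgk
        have : ∀ x, f' k x = f k x := fun x => by simp only [hf', if_neg hgk]
        rw [hI'k]
        congr 2
        exact Finset.sum_congr rfl (fun x _ => by rw [this x])
    -- combine
    have hIH := ih S' I' f' hS'card hI'sub hdep' hf'0 hdeg'
    have hSle : S.card ≤ Fintype.card G := Finset.card_le_univ _
    have hpows : (N:ℝ) ^ (Fintype.card G - S'.card)
        = N * (N:ℝ) ^ (Fintype.card G - S.card) := by
      rw [hS'card, hScard]
      have : Fintype.card G - n = (Fintype.card G - (n+1)) + 1 := by omega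
      rw [this, pow_succ]
      ring
    have hfinal : (N:ℝ) * (∑ x : G → Fin N, ∏ k, f k x) ≤
        (N:ℝ) * ((N:ℝ) ^ (Fintype.card G - S.card) *
          ∏ k, Real.sqrt ((∑ x : G → Fin N, f k x ^ 2) /
            (N:ℝ) ^ (Fintype.card G - (I k).card))) := by
      apply le_trans hstep
      apply le_trans hIH
      rw [Finset.prod_congr rfl (fun k _ => hfac k), hpows]
      rw [mul_assoc]
    exact le_of_mul_le_mul_left hfinal hNR

end Stmt13Aux


/-- generalized Cauchy–Schwarz inequality over an even-covering
`I_1,…,I_p` of a finite set `G`: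
`Σ_{x : G → {1,…,N}} ∏_k a_k(x|_{I_k}) ≤ ∏_k (Σ_{y : I_k → {1,…,N}} a_k(y)²)^{1/2}`. -/
theorem stmt13 (G : Type*) [Fintype G] [DecidableEq G] (p N : ℕ) (hN : 1 ≤ N)
    (I : Fin p → Finset G) (hne : ∀ k, (I k).Nonempty)
    (hcov : ∀ g : G, ∃ k, g ∈ I k)
    (heven : ∀ g : G, Even ((Finset.univ.filter (fun k => g ∈ I k)).card))
    (a : (k : Fin p) → ({i // i ∈ I k} → Fin N) → ℝ)
    (ha : ∀ k y, 0 ≤ a k y) :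
    ∑ x : G → Fin N, ∏ k : Fin p, a k (fun i => x i.1) ≤
      ∏ k : Fin p, Real.sqrt (∑ y : {i // i ∈ I k} → Fin N, (a k y) ^ 2) := by
  have hNR : (0:ℝ) < N := by exact_mod_cast hN
  set f : Fin p → (G → Fin N) → ℝ := fun k x => a k (fun i => x i.1) with hf
  have hdep : ∀ k x y, (∀ i ∈ I k, x i = y i) → f k x = f k y := by
    intro k x y hxy
    simp only [hf]
    congr 1
    funext i
    exact hxy i.1 i.2
  have hf0 : ∀ k x, 0 ≤ f k x := fun k x => ha k _
  have hdeg : ∀ g ∈ (Finset.univ : Finset G),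
      2 ≤ (Finset.univ.filter (fun k => g ∈ I k)).card := by
    intro g _
    obtain ⟨k, hk⟩ := hcov g
    have h1 : 0 < (Finset.univ.filter (fun k => g ∈ I k)).card :=
      Finset.card_pos.2 ⟨k, Finset.mem_filter.2 ⟨Finset.mem_univ k, hk⟩⟩
    obtain ⟨m, hm⟩ := heven g
    omega
  have h := aux13 N p hN (Fintype.card G) Finset.univ I f
    (Finset.card_univ) (fun k => Finset.subset_univ _) hdep hf0 hdeg
  rw [Finset.card_univ, Nat.sub_self, pow_zero, one_mul] at h
  apply le_trans h
  apply le_of_eq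
  apply Finset.prod_congr rfl
  intro k _
  congr 1
  have hm := sum_restrict N (I k) (fun y => a k y ^ 2)
  have : ∑ x : G → Fin N, f k x ^ 2
      = (N:ℝ) ^ (Fintype.card G - (I k).card) * ∑ y : {i // i ∈ I k} → Fin N, a k y ^ 2 := hm
  rw [this, mul_div_cancel_left₀ _ (by positivity)]
end
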